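/- arXiv:1608.00950 — 9 statements merged into one kernel-verified Lean document; each statement's English description precedes it below -/
import Mathlib

section
/- Let U ⊆ ℂ be open and let K ⊆ U be compact. Then there exist finitely many closed axis-parallel squares Q₁, …, Q_M ⊆ U with pairwise disjoint interiors such that K is contained in the interior of Q₁ ∪ ⋯ ∪ Q_M, and for every holomorphic function f on U the following hold: (a) for every z in the interior of some Q_j, (1/(2πi)) Σ_{i=1}^{M} ∮_{∂Q_i} f(ζ)/(ζ − z) dζ = f(z); (b) for every z ∈ U \ (Q₁ ∪ ⋯ ∪ Q_M), the sum Σ_{i=1}^{M} ∮_{∂Q_i} f(ζ)/(ζ − z) dζ = 0. -/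
open Complex

/-- The closed axis-parallel square `[a, a+s] × [b, b+s]`, viewed as a subset of `ℂ`. -/
def closedSquare (a b s : ℝ) : Set ℂ :=
  {z : ℂ | z.re ∈ Set.Icc a (a + s) ∧ z.im ∈ Set.Icc b (b + s)}

/-- The positively oriented boundary integral of `g` along the boundary of the closed
axis-parallel square `[a, a+s] × [b, b+s]`. -/
noncomputable def squareBoundaryIntegral (a b s : ℝ) (g : ℂ → ℂ) : ℂ :=
  (∫ x in a..(a + s), g (x + b * Complex.I))
    + Complex.I * (∫ y in b..(b + s), g ((a + s) + y * Complex.I))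
    - (∫ x in a..(a + s), g (x + (b + s) * Complex.I))
    - Complex.I * (∫ y in b..(b + s), g (a + y * Complex.I))

/-!
Cover `K` by the squares of a fine grid that meet a small neighbourhood of `K`: they lie in `U`,
have disjoint interiors, and their union is a neighbourhood of `K`. On one square, Goursat's
theorem applied to the difference quotient `dslope f z` reduces Cauchy's formula to the winding
number `∮ (ζ - z)⁻¹ dζ = 2πi`, computed side by side with branches of the logarithm; for `z`
outside the square the integrand is holomorphic on it and the integral vanishes. A point interior
to one grid square lies in no other, so only its own square contributes to the sum.
-/

open Set Metric
open scoped Real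

section Square

variable {a b s : ℝ}

lemma closedSquare_eq_reProdIm (a b s : ℝ) :
    closedSquare a b s = Icc a (a + s) ×ℂ Icc b (b + s) := by
  ext z; simp [closedSquare, mem_reProdIm]

lemma isClosed_closedSquare (a b s : ℝ) : IsClosed (closedSquare a b s) := by
  rw [closedSquare_eq_reProdIm]
  exact isClosed_Icc.reProdIm isClosed_Icc

lemma mem_interior_closedSquare {z : ℂ} :
    z ∈ interior (closedSquare a b s) ↔
      (a < z.re ∧ z.re < a + s) ∧ (b < z.im ∧ z.im < b + s) := by
  rw [closedSquare_eq_reProdIm, interior_reProdIm, interior_Icc, interior_Icc, mem_reProdIm]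
  simp only [mem_Ioo]

lemma dist_le_of_mem_closedSquare {z w : ℂ} (hz : z ∈ closedSquare a b s)
    (hw : w ∈ closedSquare a b s) : dist z w ≤ 2 * s := by
  obtain ⟨⟨hz₁, hz₂⟩, hz₃, hz₄⟩ := hz
  obtain ⟨⟨hw₁, hw₂⟩, hw₃, hw₄⟩ := hw
  have hre : |(z - w).re| ≤ s := by rw [sub_re, abs_le]; constructor <;> linarith
  have him : |(z - w).im| ≤ s := by rw [sub_im, abs_le]; constructor <;> linarith
  calc dist z w = ‖z - w‖ := dist_eq_norm z w
    _ ≤ |(z - w).re| + |(z - w).im| := norm_le_abs_re_add_abs_im _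
    _ ≤ 2 * s := by linarith

lemma sides_mapsTo_frontier_closedSquare (hs : 0 ≤ s) :
    MapsTo (fun x : ℝ => (x : ℂ) + b * I) (uIcc a (a + s)) (frontier (closedSquare a b s)) ∧
    MapsTo (fun y : ℝ => (a : ℂ) + s + y * I) (uIcc b (b + s)) (frontier (closedSquare a b s)) ∧
    MapsTo (fun x : ℝ => (x : ℂ) + (b + s) * I) (uIcc a (a + s))
      (frontier (closedSquare a b s)) ∧
    MapsTo (fun y : ℝ => (a : ℂ) + y * I) (uIcc b (b + s)) (frontier (closedSquare a b s)) := by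
  rw [(isClosed_closedSquare a b s).frontier_eq, uIcc_of_le (by linarith),
    uIcc_of_le (by linarith)]
  refine ⟨?_, ?_, ?_, ?_⟩
  all_goals
    intro t ⟨ht₁, ht₂⟩
    refine ⟨by simp [closedSquare]; and_intros <;> linarith, fun h => ?_⟩
    rw [mem_interior_closedSquare] at h
    simp at h

end Square

section BoundaryIntegral

variable {a b s : ℝ} {g h : ℂ → ℂ}

lemma squareBoundaryIntegral_congr (hs : 0 ≤ s)
    (hgh : EqOn g h (frontier (closedSquare a b s))) :
    squareBoundaryIntegral a b s g = squareBoundaryIntegral a b s h := by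
  obtain ⟨hB, hR, hT, hL⟩ := sides_mapsTo_frontier_closedSquare (a := a) (b := b) hs
  have side {γ : ℝ → ℂ} {u v : ℝ} (hmaps : MapsTo γ (uIcc u v) (frontier (closedSquare a b s))) :
      ∫ t in u..v, g (γ t) = ∫ t in u..v, h (γ t) :=
    intervalIntegral.integral_congr fun t ht => hgh (hmaps ht)
  unfold squareBoundaryIntegral
  rw [side hB, side hR, side hT, side hL]

lemma squareBoundaryIntegral_add_const_mul (hs : 0 ≤ s)
    (hg : ContinuousOn g (frontier (closedSquare a b s)))
    (hh : ContinuousOn h (frontier (closedSquare a b s))) (c : ℂ) :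
    squareBoundaryIntegral a b s (fun ζ => g ζ + c * h ζ) =
      squareBoundaryIntegral a b s g + c * squareBoundaryIntegral a b s h := by
  obtain ⟨hB, hR, hT, hL⟩ := sides_mapsTo_frontier_closedSquare (a := a) (b := b) hs
  have side {γ : ℝ → ℂ} {u v : ℝ} (hγ : Continuous γ)
      (hmaps : MapsTo γ (uIcc u v) (frontier (closedSquare a b s))) :
      ∫ t in u..v, g (γ t) + c * h (γ t) = (∫ t in u..v, g (γ t)) + c * ∫ t in u..v, h (γ t) := by
    rw [intervalIntegral.integral_add, intervalIntegral.integral_const_mul]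
    · exact (hg.comp hγ.continuousOn hmaps).intervalIntegrable
    · exact (continuousOn_const.mul (hh.comp hγ.continuousOn hmaps)).intervalIntegrable
  unfold squareBoundaryIntegral
  rw [side (by fun_prop) hB, side (by fun_prop) hR, side (by fun_prop) hT, side (by fun_prop) hL]
  ring

lemma squareBoundaryIntegral_eq_zero_of_differentiableOn (hs : 0 ≤ s)
    (hg : DifferentiableOn ℂ g (closedSquare a b s)) :
    squareBoundaryIntegral a b s g = 0 := by
  have h := integral_boundary_rect_eq_zero_of_differentiableOn g (a + b * I) (a + s + (b + s) * I)
    (by simpa [uIcc_of_le, hs, closedSquare_eq_reProdIm] using hg)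
  simp only [add_re, ofReal_re, mul_re, I_re, mul_zero, ofReal_im, I_im, mul_one, sub_self,
    add_zero, add_im, mul_im, zero_add, smul_eq_mul] at h
  unfold squareBoundaryIntegral
  push_cast at h
  linear_combination h

end BoundaryIntegral

lemma integral_inv_mul_eq_log_sub {γ : ℝ → ℂ} {d : ℂ} {u v : ℝ} (hγ : ∀ t, HasDerivAt γ d t)
    (hslit : ∀ t ∈ uIcc u v, γ t ∈ slitPlane) :
    ∫ t in u..v, (γ t)⁻¹ * d = log (γ v) - log (γ u) := by
  have hγc : Continuous γ := continuous_iff_continuousAt.2 fun t => (hγ t).continuousAt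
  apply intervalIntegral.integral_eq_sub_of_hasDerivAt
  · exact fun t ht => (hasDerivAt_log (hslit t ht)).comp t (hγ t)
  · exact ((hγc.continuousOn.inv₀ fun t ht => slitPlane_ne_zero (hslit t ht)).mul
      continuousOn_const).intervalIntegrable

lemma log_neg_of_im_neg {w : ℂ} (hw : w.im < 0) : log (-w) = log w + π * I := by
  apply Complex.ext
  · simp [log_re]
  · simp [log_im, arg_neg_eq_arg_add_pi_of_im_neg hw]

lemma log_neg_of_im_pos {w : ℂ} (hw : 0 < w.im) : log (-w) = log w - π * I := by
  apply Complex.ext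
  · simp [log_re]
  · simp [log_im, arg_neg_eq_arg_sub_pi_of_im_pos hw]

lemma squareBoundaryIntegral_inv_sub {a b s : ℝ} {z : ℂ}
    (hz : z ∈ interior (closedSquare a b s)) :
    squareBoundaryIntegral a b s (fun ζ => (ζ - z)⁻¹) = 2 * π * I := by
  obtain ⟨⟨ha, ha'⟩, hb, hb'⟩ := mem_interior_closedSquare.1 hz
  have bottom := integral_inv_mul_eq_log_sub (γ := fun x : ℝ => x + b * I - z) (u := a) (v := a + s)
    (fun t => ((hasDerivAt_id' (t : ℂ)).add_const _).sub_const z |>.comp_ofReal)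
    (fun t _ => mem_slitPlane_iff.2 (Or.inr (by simp; linarith)))
  have top := integral_inv_mul_eq_log_sub (γ := fun x : ℝ => x + (b + s) * I - z) (u := a)
    (v := a + s)
    (fun t => ((hasDerivAt_id' (t : ℂ)).add_const _).sub_const z |>.comp_ofReal)
    (fun t _ => mem_slitPlane_iff.2 (Or.inr (by simp; linarith)))
  have right := integral_inv_mul_eq_log_sub (γ := fun y : ℝ => a + s + y * I - z) (u := b)
    (v := b + s)
    (fun t => (((hasDerivAt_id' (t : ℂ)).mul_const I).const_add _).sub_const z |>.comp_ofReal)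
    (fun t _ => mem_slitPlane_iff.2 (Or.inl (by simp; linarith)))
  -- the left side crosses the branch cut of `log`, so it is integrated via `log (-·)`
  have left := integral_inv_mul_eq_log_sub (γ := fun y : ℝ => -(a + y * I - z)) (u := b)
    (v := b + s)
    (fun t => ((((hasDerivAt_id' (t : ℂ)).mul_const I).const_add _).sub_const z).neg |>.comp_ofReal)
    (fun t _ => mem_slitPlane_iff.2 (Or.inl (by simp; linarith)))
  simp only [mul_one, one_mul, inv_neg, neg_mul_neg, intervalIntegral.integral_mul_const]
    at bottom top right left
  rw [log_neg_of_im_pos (w := a + (b + s : ℝ) * I - z) (by simp; linarith),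
    log_neg_of_im_neg (w := a + b * I - z) (by simp; linarith)] at left
  unfold squareBoundaryIntegral
  push_cast at bottom top right left ⊢
  linear_combination bottom + right - top - left

section CauchyFormula

variable {a b s : ℝ} {f : ℂ → ℂ} {z : ℂ}

lemma squareBoundaryIntegral_div_sub_of_notMem (hs : 0 ≤ s)
    (hf : DifferentiableOn ℂ f (closedSquare a b s)) (hz : z ∉ closedSquare a b s) :
    squareBoundaryIntegral a b s (fun ζ => f ζ / (ζ - z)) = 0 :=
  squareBoundaryIntegral_eq_zero_of_differentiableOn hs <|
    hf.div (differentiableOn_id.sub_const z) fun _ hζ => sub_ne_zero.2 (ne_of_mem_of_not_mem hζ hz)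

lemma squareBoundaryIntegral_div_sub (hf : DifferentiableOn ℂ f (closedSquare a b s))
    (hz : z ∈ interior (closedSquare a b s)) :
    squareBoundaryIntegral a b s (fun ζ => f ζ / (ζ - z)) = 2 * π * I * f z := by
  have hs : 0 ≤ s := by
    obtain ⟨⟨ha, ha'⟩, -⟩ := mem_interior_closedSquare.1 hz
    linarith
  have hz_frontier : z ∉ frontier (closedSquare a b s) := fun h => h.2 hz
  have hdslope : DifferentiableOn ℂ (dslope f z) (closedSquare a b s) :=
    (differentiableOn_dslope (mem_interior_iff_mem_nhds.1 hz)).2 hf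
  have hinv : ContinuousOn (fun ζ => (ζ - z)⁻¹) (frontier (closedSquare a b s)) :=
    (continuousOn_id.sub continuousOn_const).inv₀ fun ζ hζ =>
      sub_ne_zero.2 (ne_of_mem_of_not_mem hζ hz_frontier)
  calc squareBoundaryIntegral a b s (fun ζ => f ζ / (ζ - z))
      = squareBoundaryIntegral a b s (fun ζ => dslope f z ζ + f z * (ζ - z)⁻¹) := by
        refine squareBoundaryIntegral_congr hs fun ζ hζ => ?_
        have hζz : ζ - z ≠ 0 := sub_ne_zero.2 (ne_of_mem_of_not_mem hζ hz_frontier)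
        rw [dslope_of_ne f (sub_ne_zero.1 hζz), slope_def_field]
        field_simp
        ring
    _ = 2 * π * I * f z := by
        rw [squareBoundaryIntegral_add_const_mul hs
            (hdslope.continuousOn.mono (isClosed_closedSquare a b s).frontier_subset) hinv,
          squareBoundaryIntegral_eq_zero_of_differentiableOn hs hdslope,
          squareBoundaryIntegral_inv_sub hz]
        ring

end CauchyFormula

section Grid

def gridSquare (δ : ℝ) (p : ℤ × ℤ) : Set ℂ :=
  closedSquare (p.1 * δ) (p.2 * δ) δ

variable {δ : ℝ}

lemma floor_div_mul_le_and_le_add (hδ : 0 < δ) (t : ℝ) :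
    ⌊t / δ⌋ * δ ≤ t ∧ t ≤ ⌊t / δ⌋ * δ + δ := by
  have h₁ := Int.floor_le (t / δ)
  have h₂ := Int.lt_floor_add_one (t / δ)
  rw [le_div_iff₀ hδ] at h₁
  rw [div_lt_iff₀ hδ] at h₂
  constructor <;> linarith

lemma mem_gridSquare_floor (hδ : 0 < δ) (w : ℂ) :
    w ∈ gridSquare δ (⌊w.re / δ⌋, ⌊w.im / δ⌋) :=
  ⟨floor_div_mul_le_and_le_add hδ w.re, floor_div_mul_le_and_le_add hδ w.im⟩

lemma eq_of_mem_Ioo_mul_of_mem_Icc_mul (hδ : 0 < δ) {t : ℝ} {m n : ℤ}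
    (hm : t ∈ Ioo (m * δ) (m * δ + δ)) (hn : t ∈ Icc (n * δ) (n * δ + δ)) : m = n := by
  have hmn : (m : ℝ) * δ < (n + 1) * δ := by linarith [hm.1, hn.2]
  have hnm : (n : ℝ) * δ < (m + 1) * δ := by linarith [hm.2, hn.1]
  have hmn' : (m : ℝ) < n + 1 := lt_of_mul_lt_mul_right hmn hδ.le
  have hnm' : (n : ℝ) < m + 1 := lt_of_mul_lt_mul_right hnm hδ.le
  have : m < n + 1 := by exact_mod_cast hmn'
  have : n < m + 1 := by exact_mod_cast hnm'
  omega

lemma eq_of_mem_interior_gridSquare_of_mem_gridSquare (hδ : 0 < δ) {p q : ℤ × ℤ} {w : ℂ}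
    (hp : w ∈ interior (gridSquare δ p)) (hq : w ∈ gridSquare δ q) : p = q := by
  obtain ⟨hre, him⟩ := mem_interior_closedSquare.1 hp
  exact Prod.ext (eq_of_mem_Ioo_mul_of_mem_Icc_mul hδ hre hq.1)
    (eq_of_mem_Ioo_mul_of_mem_Icc_mul hδ him hq.2)

lemma mem_Icc_ceil_of_mem_Icc_mul (hδ : 0 < δ) {t R : ℝ} {m : ℤ}
    (ht : t ∈ Icc (m * δ) (m * δ + δ)) (hR : |t| ≤ R) :
    m ∈ Icc (-⌈R / δ⌉ - 1) ⌈R / δ⌉ := by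
  obtain ⟨ht₁, ht₂⟩ := ht
  obtain ⟨hR₁, hR₂⟩ := abs_le.1 hR
  have hceil := Int.le_ceil (R / δ)
  rw [div_le_iff₀ hδ] at hceil
  have hupper : (m : ℝ) ≤ ⌈R / δ⌉ := le_of_mul_le_mul_right (by linarith) hδ
  have hlower : ((-⌈R / δ⌉ - 1 : ℤ) : ℝ) ≤ m := le_of_mul_le_mul_right (by push_cast; linarith) hδ
  exact ⟨by exact_mod_cast hlower, by exact_mod_cast hupper⟩

lemma finite_setOf_gridSquare_inter_nonempty (hδ : 0 < δ) {B : Set ℂ}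
    (hB : Bornology.IsBounded B) : {p : ℤ × ℤ | (gridSquare δ p ∩ B).Nonempty}.Finite := by
  obtain ⟨R, hR⟩ := hB.subset_closedBall 0
  refine (Set.finite_Icc (-⌈R / δ⌉ - 1, -⌈R / δ⌉ - 1) (⌈R / δ⌉, ⌈R / δ⌉)).subset ?_
  rintro p ⟨w, ⟨hre, him⟩, hwB⟩
  have hw : ‖w‖ ≤ R := by simpa using hR hwB
  have h₁ := mem_Icc_ceil_of_mem_Icc_mul hδ hre ((abs_re_le_norm w).trans hw)
  have h₂ := mem_Icc_ceil_of_mem_Icc_mul hδ him ((abs_im_le_norm w).trans hw)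
  exact ⟨Prod.mk_le_mk.2 ⟨h₁.1, h₂.1⟩, Prod.mk_le_mk.2 ⟨h₁.2, h₂.2⟩⟩

lemma closedSquare_subset_thickening {a b s : ℝ} {K : Set ℂ}
    (h : (closedSquare a b s ∩ thickening δ K).Nonempty) :
    closedSquare a b s ⊆ thickening (2 * s + δ) K := by
  obtain ⟨w, hwQ, hwK⟩ := h
  obtain ⟨k, hk, hwk⟩ := mem_thickening_iff.1 hwK
  intro q hq
  exact mem_thickening_iff.2
    ⟨k, hk, by linarith [dist_triangle q w k, dist_le_of_mem_closedSquare hq hwQ]⟩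

lemma exists_gridSquare_cover {U K : Set ℂ} (hU : IsOpen U) (hK : IsCompact K) (hKU : K ⊆ U) :
    ∃ δ > 0, ∃ (M : ℕ) (P : Fin M → ℤ × ℤ), Function.Injective P ∧
      (∀ j, gridSquare δ (P j) ⊆ U) ∧ K ⊆ interior (⋃ j, gridSquare δ (P j)) := by
  obtain ⟨ε, hε, hεU⟩ := hK.exists_thickening_subset_open hU hKU
  obtain ⟨δ, hδ, rfl⟩ : ∃ δ, 0 < δ ∧ ε = 2 * δ + δ := ⟨ε / 3, by positivity, by ring⟩
  obtain ⟨M, P, hPinj, hPrange⟩ :=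
    (finite_setOf_gridSquare_inter_nonempty hδ (hK.isBounded.thickening (δ := δ))).fin_param
  refine ⟨δ, hδ, M, P, hPinj, fun j => ?_, fun z hz => ?_⟩
  · exact (closedSquare_subset_thickening (hPrange.subset (mem_range_self j))).trans hεU
  · refine mem_interior.2 ⟨ball z δ, fun w hw => ?_, isOpen_ball, mem_ball_self hδ⟩
    have hw_floor := mem_gridSquare_floor hδ w
    obtain ⟨j, hj⟩ : (⌊w.re / δ⌋, ⌊w.im / δ⌋) ∈ range P :=
      hPrange.symm.subset ⟨w, hw_floor, mem_thickening_iff.2 ⟨z, hz, hw⟩⟩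
    exact mem_iUnion.2 ⟨j, hj ▸ hw_floor⟩

end Grid

/-- **Cauchy's integral formula for compact sets (square version).** For every open
`U ⊆ ℂ` and compact `K ⊆ U` there are finitely many closed axis-parallel squares
`Q₁, …, Q_M ⊆ U` with pairwise disjoint interiors, whose union contains `K` in its
interior, such that for every holomorphic `f` on `U` the sum of the boundary integrals
of `f(ζ)/(ζ - z)` reproduces `2πi·f(z)` for `z` in the interior of some `Q_j` and
vanishes for `z ∈ U` outside the union of the squares. -/
theorem cauchy_integral_formula_compact (U : Set ℂ) (hU : IsOpen U)
    (K : Set ℂ) (hK : IsCompact K) (hKU : K ⊆ U) :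
    ∃ (M : ℕ) (a b s : Fin M → ℝ),
      (∀ j, 0 < s j) ∧
      (∀ j, closedSquare (a j) (b j) (s j) ⊆ U) ∧
      (Pairwise fun j k =>
        interior (closedSquare (a j) (b j) (s j)) ∩
          interior (closedSquare (a k) (b k) (s k)) = ∅) ∧
      K ⊆ interior (⋃ j, closedSquare (a j) (b j) (s j)) ∧
      ∀ f : ℂ → ℂ, DifferentiableOn ℂ f U →
        (∀ z : ℂ, (∃ j, z ∈ interior (closedSquare (a j) (b j) (s j))) →
          (2 * Real.pi * Complex.I)⁻¹ *
            ∑ j, squareBoundaryIntegral (a j) (b j) (s j) (fun ζ => f ζ / (ζ - z)) = f z) ∧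
        (∀ z ∈ U \ ⋃ j, closedSquare (a j) (b j) (s j),
          ∑ j, squareBoundaryIntegral (a j) (b j) (s j) (fun ζ => f ζ / (ζ - z)) = 0) := by
  obtain ⟨δ, hδ, M, P, hPinj, hPU, hKP⟩ := exists_gridSquare_cover hU hK hKU
  have hsep {j k : Fin M} (hjk : j ≠ k) {w : ℂ} (hw : w ∈ interior (gridSquare δ (P j))) :
      w ∉ gridSquare δ (P k) :=
    fun hw' => hjk (hPinj (eq_of_mem_interior_gridSquare_of_mem_gridSquare hδ hw hw'))
  refine ⟨M, fun j => (P j).1 * δ, fun j => (P j).2 * δ, fun _ => δ, fun _ => hδ, hPU,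
    fun j k hjk => eq_empty_of_forall_notMem fun w hw => hsep hjk hw.1 (interior_subset hw.2),
    hKP, fun f hf => ⟨?_, ?_⟩⟩
  · rintro z ⟨j, hz⟩
    rw [Finset.sum_eq_single j (fun k _ hkj => squareBoundaryIntegral_div_sub_of_notMem hδ.le
      (hf.mono (hPU k)) (hsep hkj.symm hz)) (by simp),
      squareBoundaryIntegral_div_sub (hf.mono (hPU j)) hz]
    field_simp
  · rintro z ⟨-, hz⟩
    exact Finset.sum_eq_zero fun k _ => squareBoundaryIntegral_div_sub_of_notMem hδ.le
      (hf.mono (hPU k)) fun hk => hz (mem_iUnion.2 ⟨k, hk⟩)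
end

section
/- Let n ≥ 2 and let q₁, …, qₙ ∈ (0,1). Define the Hartogs figure 𝓗(q₁,…,qₙ) = {z ∈ Δⁿ : |z₁| > q₁, or |z_i| < q_i for all i ∈ {2,…,n}}, where Δⁿ is the open unit polydisc. Then every holomorphic function f on 𝓗(q₁,…,qₙ) has a unique holomorphic extension F to Δⁿ, i.e. F is holomorphic on Δⁿ and F = f on 𝓗(q₁,…,qₙ). -/
/-!
The extension is the Cauchy integral in the first coordinate,
`F z = (2πi)⁻¹ ∮_{|ζ| = r} f(ζ, z₁, …) / (ζ - z₀) dζ` for some `q₀ < r < 1`: the circle lies in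
the annular part `{q₀ < |z₀|}` of `𝓗(q)`. Differentiating under the integral, with the Cauchy
estimates bounding the derivative of the integrand, shows that `F` is holomorphic on
`{|z₀| < r}`. By the one-variable Cauchy formula `F = f` where the other coordinates are small,
and the identity theorem along the complex line from `(z₀, 0, …, 0)` to `z` extends this to all of
`{|z₀| < r} ∩ 𝓗(q)`. Gluing `F` with `f` along `|z₀| = r` gives the extension. Uniqueness is the
identity theorem on the slices `ζ ↦ (ζ, z₁, …)`, which meet `𝓗(q)` in an annulus.
-/

/-- The open unit polydisc in `ℂⁿ`. -/
def unitPolydisc (n : ℕ) : Set (Fin n → ℂ) :=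
  {z : Fin n → ℂ | ∀ i, ‖z i‖ < 1}

/-- The Hartogs figure `𝓗(q) = {z ∈ Δⁿ : |z₀| > q₀, or |z_i| < q_i for all i ≠ 0}`. -/
def hartogsFigure (n : ℕ) (q : Fin (n + 1) → ℝ) : Set (Fin (n + 1) → ℂ) :=
  {z ∈ unitPolydisc (n + 1) |
    q 0 < ‖z 0‖ ∨ ∀ i, i ≠ 0 → ‖z i‖ < q i}

open Metric Set Function Complex Filter Topology Real

theorem differentiable_update_prod {𝕜 ι : Type*} [NontriviallyNormedField 𝕜] [Fintype ι]
    [DecidableEq ι] (i : ι) :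
    Differentiable 𝕜 (fun p : 𝕜 × (ι → 𝕜) => update p.2 i p.1) := by
  refine differentiable_pi.2 fun j => ?_
  rcases eq_or_ne j i with rfl | hj
  · simp only [update_self]; fun_prop
  · simp only [update_of_ne hj]; fun_prop

theorem Convex.complex_affine_preimage {E : Type*} [AddCommGroup E] [Module ℂ E]
    (φ : ℂ →ᵃ[ℂ] E) {s : Set E} (hs : Convex ℝ s) : Convex ℝ (φ ⁻¹' s) := by
  intro t ht u hu a b ha hb hab
  have hcomb : φ (a • t + b • u) = a • φ t + b • φ u := by
    simpa only [Complex.coe_smul] using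
      Convex.combo_affine_apply (f := φ) (x := t) (y := u) (a := (a : ℂ)) (b := (b : ℂ))
        (by exact_mod_cast hab)
  simpa only [mem_preimage, hcomb] using hs ht hu ha hb hab

section Gluing

variable {𝕜 E F : Type*} [NontriviallyNormedField 𝕜] [NormedAddCommGroup E] [NormedSpace 𝕜 E]
  [NormedAddCommGroup F] [NormedSpace 𝕜 F] {s t : Set E} [∀ x, Decidable (x ∈ s)] {f g : E → F}

theorem DifferentiableOn.piecewise_union (hs : IsOpen s) (ht : IsOpen t)
    (hf : DifferentiableOn 𝕜 f s) (hg : DifferentiableOn 𝕜 g t) (hfg : EqOn f g (s ∩ t)) :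
    DifferentiableOn 𝕜 (s.piecewise f g) (s ∪ t) := by
  rintro x (hx | hx)
  · have hloc : s.piecewise f g =ᶠ[𝓝 x] f :=
      eventually_of_mem (hs.mem_nhds hx) fun y hy => piecewise_eq_of_mem _ _ _ hy
    exact ((hf.differentiableAt (hs.mem_nhds hx)).congr_of_eventuallyEq hloc).differentiableWithinAt
  · have hloc : s.piecewise f g =ᶠ[𝓝 x] g :=
      eventually_of_mem (ht.mem_nhds hx)
        ((eqOn_piecewise s).2 ⟨by rwa [inter_comm], fun _ _ => rfl⟩)
    exact ((hg.differentiableAt (ht.mem_nhds hx)).congr_of_eventuallyEq hloc).differentiableWithinAt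

end Gluing

section Holomorphic

variable {E F : Type*} [NormedAddCommGroup E] [NormedSpace ℂ E] [NormedAddCommGroup F]
  [NormedSpace ℂ F]

theorem norm_fderiv_le_of_forall_mem_closedBall_norm_le {f : E → F} {x : E} {R M : ℝ}
    (hR : 0 < R) (hf : DifferentiableOn ℂ f (closedBall x R))
    (hM : ∀ y ∈ closedBall x R, ‖f y‖ ≤ M) : ‖fderiv ℂ f x‖ ≤ M / R := by
  have hM₀ : 0 ≤ M := (norm_nonneg _).trans (hM x (mem_closedBall_self hR.le))
  refine ContinuousLinearMap.opNorm_le_bound _ (by positivity) fun v => ?_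
  rcases eq_or_ne v 0 with rfl | hv
  · simp
  have hv' : (‖v‖ : ℂ) ≠ 0 := by exact_mod_cast norm_ne_zero_iff.mpr hv
  set w : E := (‖v‖ : ℂ)⁻¹ • v
  have hw : ‖w‖ = 1 := by
    simp [w, norm_smul, inv_mul_cancel₀ (norm_ne_zero_iff.mpr hv)]
  have hline : ∀ t : ℂ, ‖t‖ ≤ R → x + t • w ∈ closedBall x R := fun t ht => by
    simpa [mem_closedBall, dist_eq_norm, norm_smul, hw] using ht
  have hg : DiffContOnCl ℂ (fun t : ℂ => f (x + t • w)) (ball 0 R) := by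
    refine DifferentiableOn.diffContOnCl ?_
    rw [closure_ball _ hR.ne']
    exact hf.comp (by fun_prop) fun t ht => hline t (by simpa using ht)
  have hderiv : deriv (fun t : ℂ => f (x + t • w)) 0 = fderiv ℂ f x w := by
    have hx : DifferentiableAt ℂ f x := hf.differentiableAt (closedBall_mem_nhds x hR)
    have hline' : HasDerivAt (fun t : ℂ => x + t • w) w 0 := by
      simpa using ((hasDerivAt_id (0 : ℂ)).smul_const w).const_add x
    exact (hx.hasFDerivAt.comp_hasDerivAt_of_eq (0 : ℂ) hline' (by simp)).deriv
  have hCauchy := Complex.norm_deriv_le_of_forall_mem_sphere_norm_le hR hg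
    fun t ht => hM _ (hline t (by simpa using ht.le))
  rw [hderiv] at hCauchy
  calc ‖fderiv ℂ f x v‖ = ‖v‖ * ‖fderiv ℂ f x w‖ := by
        rw [show v = (‖v‖ : ℂ) • w by simp [w, smul_smul, mul_inv_cancel₀ hv'], map_smul,
          norm_smul, norm_smul, hw]
        simp
    _ ≤ ‖v‖ * (M / R) := by gcongr
    _ = M / R * ‖v‖ := mul_comm _ _

theorem IsCompact.exists_thickening_forall_norm_fderiv_le {g : E → F} {Ω : Set E}
    (hΩ : IsOpen Ω) (hg : DifferentiableOn ℂ g Ω) {K : Set E} (hK : IsCompact K) (hKΩ : K ⊆ Ω) :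
    ∃ δ > 0, ∃ C, thickening δ K ⊆ Ω ∧ ∀ p ∈ thickening δ K, ‖fderiv ℂ g p‖ ≤ C := by
  obtain ⟨M, hM⟩ := hK.exists_bound_of_continuousOn (hg.continuousOn.mono hKΩ)
  set U := Ω ∩ (fun p => ‖g p‖) ⁻¹' Iio (M + 1)
  have hU : IsOpen U := hg.continuousOn.norm.isOpen_inter_preimage hΩ isOpen_Iio
  obtain ⟨δ, hδ, hδU⟩ := hK.exists_cthickening_subset_open hU fun p hp =>
    ⟨hKΩ hp, (hM p hp).trans_lt (lt_add_one M)⟩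
  have hball : ∀ p ∈ thickening (δ / 2) K, closedBall p (δ / 2) ⊆ U := fun p hp =>
    ((closedBall_subset_cthickening (thickening_subset_cthickening _ _ hp) _).trans
      (cthickening_cthickening_subset (by positivity) (by positivity) K)).trans
      (by rwa [add_halves])
  refine ⟨δ / 2, half_pos hδ, (M + 1) / (δ / 2),
    fun p hp => (hball p hp (mem_closedBall_self (by positivity))).1, fun p hp => ?_⟩
  exact norm_fderiv_le_of_forall_mem_closedBall_norm_le (half_pos hδ)
    (hg.mono fun y hy => (hball p hp hy).1) fun y hy => (hball p hp hy).2.le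

variable [CompleteSpace F]

theorem eqOn_comp_of_isPreconnected_of_eventuallyEq {f g : E → F} {U : Set E}
    (hf : DifferentiableOn ℂ f U) (hg : DifferentiableOn ℂ g U) {φ : ℂ → E}
    (hφ : Differentiable ℂ φ) {D : Set ℂ} (hD : IsOpen D) (hDc : IsPreconnected D)
    (hφD : MapsTo φ D U) {t₀ : ℂ} (ht₀ : t₀ ∈ D) (hfg : f ∘ φ =ᶠ[𝓝 t₀] g ∘ φ) :
    EqOn (f ∘ φ) (g ∘ φ) D :=
  ((hf.comp hφ.differentiableOn hφD).analyticOnNhd hD).eqOn_of_preconnected_of_eventuallyEq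
    ((hg.comp hφ.differentiableOn hφD).analyticOnNhd hD) hDc ht₀ hfg

variable [SecondCountableTopology F]

theorem differentiableAt_circleIntegral_of_differentiableOn [FiniteDimensional ℂ E]
    [MeasurableSpace E] [BorelSpace E] {g : ℂ × E → F} {Ω : Set (ℂ × E)}
    (hΩ : IsOpen Ω) (hg : DifferentiableOn ℂ g Ω) {c : ℂ} {R : ℝ} {x₀ : E}
    (hx₀ : ∀ ζ ∈ sphere c |R|, (ζ, x₀) ∈ Ω) :
    DifferentiableAt ℂ (fun x => ∮ ζ in C(c, R), g (ζ, x)) x₀ := by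
  obtain ⟨δ, hδ, C, hΩδ, hC⟩ :=
    ((isCompact_sphere c |R|).prod isCompact_singleton).exists_thickening_forall_norm_fderiv_le
      hΩ hg (by rintro ⟨ζ, x⟩ ⟨hζ, rfl⟩; exact hx₀ ζ hζ)
  have hmem : ∀ θ : ℝ, ∀ x ∈ ball x₀ δ,
      (circleMap c R θ, x) ∈ thickening δ (sphere c |R| ×ˢ {x₀}) := fun θ x hx =>
    mem_thickening_iff.2 ⟨(circleMap c R θ, x₀), ⟨circleMap_mem_sphere' c R θ, rfl⟩,
      by simpa [Prod.dist_eq] using hx⟩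
  set L : E → ℝ → E →L[ℂ] F := fun x θ =>
    deriv (circleMap c R) θ • (fderiv ℂ g (circleMap c R θ, x)).comp (.inr ℂ ℂ E)
  have hcont : ∀ x ∈ ball x₀ δ,
      Continuous fun θ => deriv (circleMap c R) θ • g (circleMap c R θ, x) := fun x hx => by
    simp only [deriv_circleMap]
    exact (by fun_prop : Continuous fun θ => circleMap 0 R θ * I).smul
      (hg.continuousOn.comp_continuous (by fun_prop) fun θ => hΩδ (hmem θ x hx))
  have hL_meas : Measurable (L x₀) := by
    simp only [L, deriv_circleMap]
    exact (by fun_prop : Continuous fun θ => circleMap 0 R θ * I).measurable.smul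
      (((ContinuousLinearMap.compL ℂ E (ℂ × E) F).flip (.inr ℂ ℂ E)).continuous.measurable.comp
        ((measurable_fderiv ℂ g).comp (by fun_prop)))
  have hL_le : ∀ θ : ℝ, ∀ x ∈ ball x₀ δ, ‖L x θ‖ ≤ |R| * C := fun θ x hx => calc
    ‖L x θ‖ = |R| * ‖(fderiv ℂ g (circleMap c R θ, x)).comp (.inr ℂ ℂ E)‖ := by
      rw [norm_smul, deriv_circleMap, norm_mul, norm_I, mul_one, norm_circleMap_zero]
    _ ≤ |R| * C := by
      gcongr
      exact (ContinuousLinearMap.opNorm_comp_le _ _).trans <|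
        (mul_le_of_le_one_right (norm_nonneg _) (ContinuousLinearMap.norm_inr_le_one ℂ ℂ E)).trans
          (hC _ (hmem θ x hx))
  exact (intervalIntegral.hasFDerivAt_integral_of_dominated_of_fderiv_le
    (F := fun x θ => deriv (circleMap c R) θ • g (circleMap c R θ, x)) (F' := L)
    (ball_mem_nhds x₀ hδ)
    (eventually_of_mem (ball_mem_nhds x₀ hδ) fun x hx => (hcont x hx).aestronglyMeasurable)
    ((hcont x₀ (mem_ball_self hδ)).intervalIntegrable _ _)
    hL_meas.aestronglyMeasurable (.of_forall fun θ _ x hx => hL_le θ x hx)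
    intervalIntegrable_const
    (.of_forall fun θ _ x hx =>
      ((hg.differentiableAt (hΩ.mem_nhds (hΩδ (hmem θ x hx)))).hasFDerivAt.comp x
        (hasFDerivAt_prodMk_right _ x)).const_smul (deriv (circleMap c R) θ))).differentiableAt

end Holomorphic

section SliceCauchyIntegral

variable {ι F : Type*} [Fintype ι] [DecidableEq ι] [NormedAddCommGroup F] [NormedSpace ℂ F]
  [CompleteSpace F]

noncomputable def sliceCauchyIntegral (i : ι) (c : ℂ) (R : ℝ) (f : (ι → ℂ) → F)
    (z : ι → ℂ) : F :=
  (2 * π * I : ℂ)⁻¹ • ∮ ζ in C(c, R), (ζ - z i)⁻¹ • f (update z i ζ)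

theorem sliceCauchyIntegral_eq_self {i : ι} {c : ℂ} {R : ℝ} {f : (ι → ℂ) → F}
    {U : Set (ι → ℂ)} (hf : DifferentiableOn ℂ f U) {z : ι → ℂ}
    (hzU : ∀ ζ ∈ closedBall c R, update z i ζ ∈ U) (hz : z i ∈ ball c R) :
    sliceCauchyIntegral i c R f z = f z := by
  have hslice : DifferentiableOn ℂ (fun ζ => f (update z i ζ)) (closedBall c R) :=
    hf.comp (fun ζ _ => (hasDerivAt_update z i ζ).differentiableAt.differentiableWithinAt) hzU
  rw [sliceCauchyIntegral, hslice.circleIntegral_sub_inv_smul hz, update_eq_self,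
    inv_smul_smul₀ two_pi_I_ne_zero]

theorem differentiableOn_sliceCauchyIntegral [SecondCountableTopology F] {i : ι} {c : ℂ}
    {R : ℝ} {f : (ι → ℂ) → F} {U V : Set (ι → ℂ)} (hU : IsOpen U) (hf : DifferentiableOn ℂ f U)
    (hV : ∀ z ∈ V, ∀ ζ ∈ sphere c |R|, ζ ≠ z i ∧ update z i ζ ∈ U) :
    DifferentiableOn ℂ (sliceCauchyIntegral i c R f) V := by
  set Ω : Set (ℂ × (ι → ℂ)) := {p | p.1 - p.2 i ≠ 0} ∩ (fun p => update p.2 i p.1) ⁻¹' U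
  have hΩ : IsOpen Ω :=
    (isOpen_ne_fun (by fun_prop) continuous_const).inter
      (hU.preimage (differentiable_update_prod i).continuous)
  have hg : DifferentiableOn ℂ (fun p : ℂ × (ι → ℂ) => (p.1 - p.2 i)⁻¹ • f (update p.2 i p.1)) Ω :=
    ((by fun_prop : Differentiable ℂ fun p : ℂ × (ι → ℂ) => p.1 - p.2 i).differentiableOn.inv
      fun p hp => hp.1).smul
      (hf.comp (differentiable_update_prod i).differentiableOn fun p hp => hp.2)
  intro z hz
  refine ((differentiableAt_circleIntegral_of_differentiableOn hΩ hg fun ζ hζ =>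
    ⟨sub_ne_zero.2 (hV z hz ζ hζ).1, (hV z hz ζ hζ).2⟩).const_smul
      ((2 * π * I : ℂ)⁻¹)).differentiableWithinAt

end SliceCauchyIntegral

theorem unitPolydisc_eq_ball (n : ℕ) : unitPolydisc n = ball 0 1 := by
  ext z
  simp [unitPolydisc, pi_norm_lt_iff zero_lt_one]

theorem isOpen_unitPolydisc (n : ℕ) : IsOpen (unitPolydisc n) :=
  unitPolydisc_eq_ball n ▸ isOpen_ball

theorem update_mem_unitPolydisc {n : ℕ} {z : Fin n → ℂ} (hz : z ∈ unitPolydisc n) (i : Fin n)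
    {ζ : ℂ} (hζ : ‖ζ‖ < 1) : update z i ζ ∈ unitPolydisc n := fun j => by
  rcases eq_or_ne j i with rfl | hj
  · simpa using hζ
  · simpa [update_of_ne hj] using hz j

theorem isOpen_setOf_forall_ne_zero_norm_lt {n : ℕ} (q : Fin (n + 1) → ℝ) :
    IsOpen {z : Fin (n + 1) → ℂ | ∀ i, i ≠ 0 → ‖z i‖ < q i} := by
  simp only [ofPred_forall]
  exact isOpen_iInter_of_finite fun i => isOpen_iInter_of_finite fun _ =>
    isOpen_lt (by fun_prop) continuous_const

theorem isOpen_hartogsFigure (n : ℕ) (q : Fin (n + 1) → ℝ) : IsOpen (hartogsFigure n q) := by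
  change IsOpen (unitPolydisc (n + 1) ∩
    ({z | q 0 < ‖z 0‖} ∪ {z | ∀ i, i ≠ 0 → ‖z i‖ < q i}))
  exact (isOpen_unitPolydisc _).inter ((isOpen_lt continuous_const (by fun_prop)).union
    (isOpen_setOf_forall_ne_zero_norm_lt q))

section Hartogs

variable {n : ℕ} {q : Fin (n + 1) → ℝ} {E : Type*} [NormedAddCommGroup E] [NormedSpace ℂ E]
  [CompleteSpace E]

theorem eqOn_unitPolydisc_of_eqOn_hartogsFigure (hq : q 0 < 1) {f g : (Fin (n + 1) → ℂ) → E}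
    (hf : DifferentiableOn ℂ f (unitPolydisc (n + 1)))
    (hg : DifferentiableOn ℂ g (unitPolydisc (n + 1))) (hfg : EqOn f g (hartogsFigure n q)) :
    EqOn f g (unitPolydisc (n + 1)) := by
  intro z hz
  have hmaps : MapsTo (update z 0) (ball 0 1) (unitPolydisc (n + 1)) := fun ζ hζ =>
    update_mem_unitPolydisc hz 0 (mem_ball_zero_iff.1 hζ)
  obtain ⟨a, ha, ha1⟩ := exists_between (max_lt hq zero_lt_one)
  have hnorm_a : ‖(a : ℂ)‖ = a := by
    rw [norm_real, Real.norm_of_nonneg ((le_max_right _ _).trans ha.le)]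
  have hannulus : {ζ : ℂ | q 0 < ‖ζ‖ ∧ ‖ζ‖ < 1} ∈ 𝓝 (a : ℂ) :=
    ((isOpen_lt continuous_const continuous_norm).inter
      (isOpen_lt continuous_norm continuous_const)).mem_nhds
      (show q 0 < ‖(a : ℂ)‖ ∧ ‖(a : ℂ)‖ < 1 by
        rw [hnorm_a]; exact ⟨(le_max_left _ _).trans_lt ha, ha1⟩)
  have hnear : f ∘ update z 0 =ᶠ[𝓝 (a : ℂ)] g ∘ update z 0 := by
    filter_upwards [hannulus] with ζ hζ
    exact hfg ⟨hmaps (mem_ball_zero_iff.2 hζ.2), Or.inl (by simpa using hζ.1)⟩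
  simpa using eqOn_comp_of_isPreconnected_of_eventuallyEq hf hg
    (fun ζ => (hasDerivAt_update z 0 ζ).differentiableAt) isOpen_ball
    (convex_ball 0 1).isPreconnected hmaps (by rwa [mem_ball_zero_iff, hnorm_a]) hnear
    (mem_ball_zero_iff.2 (hz 0))

theorem sliceCauchyIntegral_eq_of_norm_lt {r : ℝ} (hr1 : r < 1)
    {f : (Fin (n + 1) → ℂ) → E} (hf : DifferentiableOn ℂ f (hartogsFigure n q)) {z : Fin (n + 1) → ℂ}
    (hz : z ∈ unitPolydisc (n + 1)) (hz0 : ‖z 0‖ < r) (hzq : ∀ i, i ≠ 0 → ‖z i‖ < q i) :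
    sliceCauchyIntegral 0 0 r f z = f z :=
  sliceCauchyIntegral_eq_self hf
    (fun ζ hζ => ⟨update_mem_unitPolydisc hz 0 ((mem_closedBall_zero_iff.1 hζ).trans_lt hr1),
      Or.inr fun i hi => by simpa [update_of_ne hi] using hzq i hi⟩)
    (mem_ball_zero_iff.2 hz0)

variable [SecondCountableTopology E] {r : ℝ} {f : (Fin (n + 1) → ℂ) → E}

theorem differentiableOn_sliceCauchyIntegral_hartogsFigure (hr : q 0 < r) (hr1 : r < 1)
    (hf : DifferentiableOn ℂ f (hartogsFigure n q)) :
    DifferentiableOn ℂ (sliceCauchyIntegral 0 0 r f)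
      (unitPolydisc (n + 1) ∩ {z | ‖z 0‖ < r}) := by
  refine differentiableOn_sliceCauchyIntegral (isOpen_hartogsFigure n q) hf fun z hz ζ hζ => ?_
  have hζr : ‖ζ‖ = r := by
    rwa [mem_sphere_zero_iff_norm, abs_of_pos ((norm_nonneg _).trans_lt hz.2)] at hζ
  refine ⟨fun h => hz.2.ne (h ▸ hζr), update_mem_unitPolydisc hz.1 0 (hζr ▸ hr1), Or.inl ?_⟩
  rwa [update_self, hζr]

theorem sliceCauchyIntegral_eqOn_hartogsFigure (hq : ∀ i, i ≠ 0 → 0 < q i) (hr : q 0 < r)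
    (hr1 : r < 1) (hf : DifferentiableOn ℂ f (hartogsFigure n q)) :
    EqOn (sliceCauchyIntegral 0 0 r f) f
      (unitPolydisc (n + 1) ∩ {z | ‖z 0‖ < r} ∩ hartogsFigure n q) := by
  set V := unitPolydisc (n + 1) ∩ {z | ‖z 0‖ < r}
  set T := {z : Fin (n + 1) → ℂ | ∀ i, i ≠ 0 → ‖z i‖ < q i}
  rintro z ⟨hzV, hzH⟩
  rcases hzH.2 with hz0 | hzq
  swap
  · exact sliceCauchyIntegral_eq_of_norm_lt hr1 hf hzV.1 hzV.2 hzq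
  -- The line from `(z 0, 0, …, 0)` to `z` keeps `z 0` fixed and starts in `V ∩ T`.
  set φ := AffineMap.lineMap (k := ℂ) (Pi.single 0 (z 0) : Fin (n + 1) → ℂ) z
  have hφ0 : ∀ t : ℂ, φ t 0 = z 0 := fun t => by
    simp [φ, AffineMap.lineMap_apply_module']
  have hφ : Differentiable ℂ φ := fun t => AffineMap.hasDerivAt_lineMap.differentiableAt
  set D := φ ⁻¹' unitPolydisc (n + 1)
  have hmaps : MapsTo φ D (V ∩ hartogsFigure n q) := fun t ht => by
    refine ⟨⟨ht, ?_⟩, ht, Or.inl ?_⟩ <;> simp only [mem_ofPred_eq, hφ0]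
    exacts [hzV.2, hz0]
  have hφ_start : φ 0 ∈ V ∩ T := by
    refine ⟨⟨fun i => ?_, by simpa [φ] using hzV.2⟩, fun i hi => by simpa [φ, hi] using hq i hi⟩
    rcases eq_or_ne i 0 with rfl | hi
    · simpa [φ] using hzV.1 0
    · simp [φ, hi]
  have hnear : sliceCauchyIntegral 0 0 r f ∘ φ =ᶠ[𝓝 0] f ∘ φ := by
    have hVT : IsOpen (V ∩ T) := ((isOpen_unitPolydisc _).inter
      (isOpen_lt (by fun_prop) continuous_const)).inter (isOpen_setOf_forall_ne_zero_norm_lt q)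
    filter_upwards [hφ.continuous.continuousAt.preimage_mem_nhds (hVT.mem_nhds hφ_start)]
      with t ht using sliceCauchyIntegral_eq_of_norm_lt hr1 hf ht.1.1 ht.1.2 ht.2
  simpa [φ] using eqOn_comp_of_isPreconnected_of_eventuallyEq
    ((differentiableOn_sliceCauchyIntegral_hartogsFigure hr hr1 hf).mono inter_subset_left)
    (hf.mono inter_subset_right) hφ ((isOpen_unitPolydisc _).preimage hφ.continuous)
    (((unitPolydisc_eq_ball _).symm ▸ convex_ball 0 1).complex_affine_preimage φ).isPreconnected
    hmaps hφ_start.1.1 hnear (show φ 1 ∈ unitPolydisc (n + 1) by simpa [φ] using hzV.1)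

theorem exists_differentiableOn_unitPolydisc_eqOn_hartogsFigure (hq0 : q 0 < 1)
    (hq : ∀ i, i ≠ 0 → 0 < q i) (hf : DifferentiableOn ℂ f (hartogsFigure n q)) :
    ∃ F : (Fin (n + 1) → ℂ) → E,
      DifferentiableOn ℂ F (unitPolydisc (n + 1)) ∧ EqOn F f (hartogsFigure n q) := by
  classical
  obtain ⟨r, hr, hr1⟩ := exists_between hq0
  set V := unitPolydisc (n + 1) ∩ {z | ‖z 0‖ < r}
  have hV : IsOpen V := (isOpen_unitPolydisc _).inter (isOpen_lt (by fun_prop) continuous_const)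
  have hagree := sliceCauchyIntegral_eqOn_hartogsFigure hq hr hr1 hf
  refine ⟨V.piecewise (sliceCauchyIntegral 0 0 r f) f, ?_,
    (eqOn_piecewise V).2 ⟨by rwa [inter_comm], fun _ _ => rfl⟩⟩
  refine ((differentiableOn_sliceCauchyIntegral_hartogsFigure hr hr1 hf).piecewise_union hV
    (isOpen_hartogsFigure n q) hf hagree).mono fun z hz => ?_
  rcases lt_or_ge ‖z 0‖ r with h | h
  · exact Or.inl ⟨hz, h⟩
  · exact Or.inr ⟨hz, Or.inl (hr.trans_le h)⟩

end Hartogs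

/-- **Extension from Hartogs figures.** Let `n ≥ 2` (here the dimension is `n + 2`) and
`q_i ∈ (0,1)`. Every holomorphic function on the Hartogs figure `𝓗(q)` has a unique
holomorphic extension to the unit polydisc `Δⁿ`. -/
theorem hartogs_figure_extension (n : ℕ) (q : Fin (n + 2) → ℝ)
    (hq : ∀ i, q i ∈ Set.Ioo (0 : ℝ) 1)
    (f : (Fin (n + 2) → ℂ) → ℂ)
    (hf : DifferentiableOn ℂ f (hartogsFigure (n + 1) q)) :
    ∃ F : (Fin (n + 2) → ℂ) → ℂ,
      (DifferentiableOn ℂ F (unitPolydisc (n + 2)) ∧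
        Set.EqOn F f (hartogsFigure (n + 1) q)) ∧
      ∀ G : (Fin (n + 2) → ℂ) → ℂ,
        DifferentiableOn ℂ G (unitPolydisc (n + 2)) →
        Set.EqOn G f (hartogsFigure (n + 1) q) →
        Set.EqOn G F (unitPolydisc (n + 2)) := by
  obtain ⟨F, hF, hFf⟩ :=
    exists_differentiableOn_unitPolydisc_eqOn_hartogsFigure (hq 0).2 (fun i _ => (hq i).1) hf
  exact ⟨F, ⟨hF, hFf⟩, fun G hG hGf =>
    eqOn_unitPolydisc_of_eqOn_hartogsFigure (hq 0).2 hG hF (hGf.trans hFf.symm)⟩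
end

section
/- Let ε > 0 and let f be a holomorphic function on U = Δ²(1+ε) \ closure(Δ²(1−ε)), where Δ²(r) = {(z₁,z₂) ∈ ℂ² : |z₁| < r, |z₂| < r}. Define F on the unit bidisc Δ² = Δ²(1) by F(z₁,z₂) = (1/(2πi)) ∮_{|ζ|=1} f(z₁,ζ)/(ζ − z₂) dζ (contour integral over the positively oriented unit circle). Then F is holomorphic on Δ² and F(z₁,z₂) = f(z₁,z₂) for all (z₁,z₂) with 1−ε < |z₁| < 1 and |z₂| < 1; in particular f extends holomorphically to Δ²(1+ε). -/
/-!
For `|ζ| = 1` the slice `w ↦ f (w, ζ)` is holomorphic on the closed unit disc, so Cauchy's formula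
in `w` turns `F` into the double Cauchy integral of `f` over the torus `|w| = |ζ| = 1`. Its kernel
`1 / ((w - z₁) (ζ - z₂))` is holomorphic in `(z₁, z₂) ∈ Δ²` with locally uniformly bounded
derivative, so `F` is holomorphic by differentiation under the integral sign.

If `z₁` lies outside the closed disc of radius `1 - ε`, the slice `ζ ↦ f (z₁, ζ)` is holomorphic on
the closed unit disc and `F (z₁, z₂) = f (z₁, z₂)` is Cauchy's formula in `ζ`. At the remaining
points of `Δ² ∩ U` we have `|z₂| > 1 - ε`, and the identity theorem on the slice `z₁ ↦ (z₁, z₂)`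
propagates the equality inwards. Hence `F` and `f` glue to a holomorphic function on `Δ²(1 + ε)`.
-/

open Complex

def bidisc (r : ℝ) : Set (ℂ × ℂ) :=
  {p : ℂ × ℂ | ‖p.1‖ < r ∧ ‖p.2‖ < r}

open MeasureTheory Metric Set Filter Topology Real

theorem two_pi_I_inv_mul_circleIntegral_div_sub {g : ℂ → ℂ} {c w : ℂ} {R : ℝ}
    (hg : DifferentiableOn ℂ g (closedBall c R)) (hw : w ∈ ball c R) :
    (2 * π * I)⁻¹ * ∮ z in C(c, R), g z / (z - w) = g w := by
  rw [circleIntegral_div_sub_of_differentiable_on_off_countable countable_empty hw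
    hg.continuousOn fun z hz => hg.differentiableAt
      (mem_of_superset (isOpen_ball.mem_nhds hz.1) ball_subset_closedBall),
    ← mul_assoc, inv_mul_cancel₀ two_pi_I_ne_zero, one_mul]

theorem eqOn_ball_of_eqOn_ball_sdiff_closedBall {E : Type*} [NormedAddCommGroup E]
    [NormedSpace ℂ E] [CompleteSpace E] {g h : ℂ → E} {c : ℂ} {r R : ℝ}
    (hg : DifferentiableOn ℂ g (ball c R)) (hh : DifferentiableOn ℂ h (ball c R)) (hrR : r < R)
    (hgh : EqOn g h (ball c R \ closedBall c r)) : EqOn g h (ball c R) := by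
  intro z hz
  have hR := pos_of_mem_ball hz
  obtain ⟨v, hv⟩ := exists_norm_eq ℂ (c := (max r 0 + R) / 2) (by positivity)
  have hz₀ : c + v ∈ ball c R \ closedBall c r := by
    simp only [Set.mem_sdiff, mem_ball, mem_closedBall, dist_self_add_left, hv, not_le]
    constructor <;> linarith [le_max_left r 0, le_max_right r 0, max_lt hrR hR]
  exact (hg.analyticOnNhd isOpen_ball).eqOn_of_preconnected_of_eventuallyEq
    (hh.analyticOnNhd isOpen_ball) (convex_ball c R).isPreconnected hz₀.1
    (mem_of_superset ((isOpen_ball.sdiff isClosed_closedBall).mem_nhds hz₀) hgh) hz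

theorem exists_differentiableOn_union_eqOn {𝕜 E F : Type*} [NontriviallyNormedField 𝕜]
    [NormedAddCommGroup E] [NormedSpace 𝕜 E] [NormedAddCommGroup F] [NormedSpace 𝕜 F]
    {s t : Set E} {g f : E → F} (hs : IsOpen s) (ht : IsOpen t) (hg : DifferentiableOn 𝕜 g s)
    (hf : DifferentiableOn 𝕜 f t) (hgf : EqOn g f (s ∩ t)) :
    ∃ G, DifferentiableOn 𝕜 G (s ∪ t) ∧ EqOn G f t := by
  classical
  have hGf : EqOn (s.piecewise g f) f t := fun x hx => by
    by_cases hxs : x ∈ s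
    · rw [piecewise_eq_of_mem _ _ _ hxs, hgf ⟨hxs, hx⟩]
    · rw [piecewise_eq_of_notMem _ _ _ hxs]
  exact ⟨s.piecewise g f, (hg.congr (piecewise_eqOn s g f)).union_of_isOpen (hf.congr hGf) hs ht,
    hGf⟩

theorem Continuous.integrable_prod_restrict_Ioc {h : ℝ × ℝ → ℂ} (hh : Continuous h)
    (a b c d : ℝ) :
    Integrable h ((volume.restrict (Ioc a b)).prod (volume.restrict (Ioc c d))) := by
  rw [Measure.prod_restrict, ← Measure.volume_eq_prod]
  exact (hh.continuousOn.integrableOn_compact (isCompact_Icc.prod isCompact_Icc)).mono_set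
    (prod_mono Ioc_subset_Icc_self Ioc_subset_Icc_self)

section CauchyKernel

open ContinuousLinearMap

theorem hasFDerivAt_inv_sub_mul_inv_sub (a b : ℂ) {p : ℂ × ℂ} (ha : a - p.1 ≠ 0)
    (hb : b - p.2 ≠ 0) :
    HasFDerivAt (fun q : ℂ × ℂ => (a - q.1)⁻¹ * (b - q.2)⁻¹)
      (((a - p.1)⁻¹ ^ 2 * (b - p.2)⁻¹) • fst ℂ ℂ ℂ +
        ((a - p.1)⁻¹ * (b - p.2)⁻¹ ^ 2) • snd ℂ ℂ ℂ) p := by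
  have h₁ := (((hasDerivAt_id p.1).const_sub a).inv ha).hasFDerivAt.comp p hasFDerivAt_fst
  have h₂ := (((hasDerivAt_id p.2).const_sub b).inv hb).hasFDerivAt.comp p hasFDerivAt_snd
  refine (h₁.mul h₂).congr_fderiv (ContinuousLinearMap.ext fun y => ?_)
  simp
  ring

theorem norm_fderiv_inv_sub_mul_inv_sub_le {a b : ℂ} {p : ℂ × ℂ} {δ : ℝ} (hδ : 0 < δ)
    (ha : δ ≤ ‖a - p.1‖) (hb : δ ≤ ‖b - p.2‖) :
    ‖((a - p.1)⁻¹ ^ 2 * (b - p.2)⁻¹) • fst ℂ ℂ ℂ + ((a - p.1)⁻¹ * (b - p.2)⁻¹ ^ 2) • snd ℂ ℂ ℂ‖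
      ≤ 2 * δ⁻¹ ^ 3 := by
  have h₁ : ‖(a - p.1)⁻¹‖ ≤ δ⁻¹ := by rw [norm_inv]; exact inv_anti₀ hδ ha
  have h₂ : ‖(b - p.2)⁻¹‖ ≤ δ⁻¹ := by rw [norm_inv]; exact inv_anti₀ hδ hb
  have : 0 ≤ δ⁻¹ := inv_nonneg.2 hδ.le
  calc _ ≤ ‖(a - p.1)⁻¹ ^ 2 * (b - p.2)⁻¹‖ * ‖fst ℂ ℂ ℂ‖ +
        ‖(a - p.1)⁻¹ * (b - p.2)⁻¹ ^ 2‖ * ‖snd ℂ ℂ ℂ‖ :=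
        (norm_add_le _ _).trans (add_le_add (norm_smul_le _ _) (norm_smul_le _ _))
    _ ≤ δ⁻¹ ^ 2 * δ⁻¹ * 1 + δ⁻¹ * δ⁻¹ ^ 2 * 1 := by
        rw [norm_mul, norm_mul, norm_pow, norm_pow]
        gcongr
        exacts [norm_fst_le ℂ ℂ ℂ, norm_snd_le ℂ ℂ ℂ]
    _ = 2 * δ⁻¹ ^ 3 := by ring

theorem differentiableOn_integral_mul_inv_sub_mul_inv_sub {α : Type*} [MeasurableSpace α]
    {μ : Measure α} {g u v : α → ℂ} (hg : Integrable g μ) (hu : Measurable u)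
    (hv : Measurable v) (hu₁ : ∀ x, 1 ≤ ‖u x‖) (hv₁ : ∀ x, 1 ≤ ‖v x‖) :
    DifferentiableOn ℂ (fun p : ℂ × ℂ => ∫ x, g x * ((u x - p.1)⁻¹ * (v x - p.2)⁻¹) ∂μ)
      (ball 0 1) := by
  intro p₀ hp₀
  set δ := (1 - ‖p₀‖) / 2 with hδ_def
  have hδ : 0 < δ := by rw [mem_ball_zero_iff] at hp₀; linarith
  have hsep : ∀ x, ∀ p ∈ ball p₀ δ, δ ≤ ‖u x - p.1‖ ∧ δ ≤ ‖v x - p.2‖ := fun x p hp => by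
    rw [mem_ball_iff_norm] at hp
    have := norm_le_norm_add_norm_sub' p p₀
    have := norm_fst_le p; have := norm_snd_le p
    have := norm_sub_norm_le (u x) p.1; have := norm_sub_norm_le (v x) p.2
    constructor <;> linarith [hu₁ x, hv₁ x]
  have hne : ∀ x, ∀ p ∈ ball p₀ δ, u x - p.1 ≠ 0 ∧ v x - p.2 ≠ 0 := fun x p hp =>
    ⟨norm_pos_iff.1 (hδ.trans_le (hsep x p hp).1), norm_pos_iff.1 (hδ.trans_le (hsep x p hp).2)⟩
  have hmeas : ∀ p : ℂ × ℂ, Measurable fun x => (u x - p.1)⁻¹ * (v x - p.2)⁻¹ := fun p => by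
    fun_prop
  have hp₀δ : p₀ ∈ ball p₀ δ := mem_ball_self hδ
  refine (hasFDerivAt_integral_of_dominated_of_fderiv_le (𝕜 := ℂ) (ball_mem_nhds p₀ hδ)
    (F' := fun p x => g x • (((u x - p.1)⁻¹ ^ 2 * (v x - p.2)⁻¹) • fst ℂ ℂ ℂ +
      ((u x - p.1)⁻¹ * (v x - p.2)⁻¹ ^ 2) • snd ℂ ℂ ℂ))
    (bound := fun x => ‖g x‖ * (2 * δ⁻¹ ^ 3)) ?_ ?_ ?_ ?_ ?_ ?_).differentiableAt
    |>.differentiableWithinAt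
  · exact Eventually.of_forall fun p => hg.aestronglyMeasurable.mul (hmeas p).aestronglyMeasurable
  · refine (hg.norm.mul_const (δ⁻¹ * δ⁻¹)).mono'
      (hg.aestronglyMeasurable.mul (hmeas p₀).aestronglyMeasurable) (ae_of_all _ fun x => ?_)
    obtain ⟨h₁, h₂⟩ := hsep x p₀ hp₀δ
    rw [norm_mul, norm_mul, norm_inv, norm_inv]
    gcongr
  · exact hg.aestronglyMeasurable.smul
      ((Measurable.aestronglyMeasurable (by fun_prop)).smul_const _ |>.add
        ((Measurable.aestronglyMeasurable (by fun_prop)).smul_const _))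
  · refine ae_of_all _ fun x p hp => ?_
    rw [norm_smul]
    gcongr
    exact norm_fderiv_inv_sub_mul_inv_sub_le hδ (hsep x p hp).1 (hsep x p hp).2
  · exact hg.norm.mul_const _
  · exact ae_of_all _ fun x p hp =>
      (hasFDerivAt_inv_sub_mul_inv_sub (u x) (v x) (hne x p hp).1 (hne x p hp).2).const_mul (g x)

end CauchyKernel

theorem mk_mem_ball_zero {E F : Type*} [SeminormedAddCommGroup E] [SeminormedAddCommGroup F]
    {z : E} {w : F} {r : ℝ} : (z, w) ∈ ball (0 : E × F) r ↔ ‖z‖ < r ∧ ‖w‖ < r := by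
  rw [mem_ball_zero_iff, Prod.norm_mk, max_lt_iff]

theorem mk_mem_ball_sdiff_closure_ball {E F : Type*} [SeminormedAddCommGroup E]
    [SeminormedAddCommGroup F] {z : E} {w : F} {r s : ℝ} :
    (z, w) ∈ ball (0 : E × F) s \ closure (ball 0 r) ↔
      (‖z‖ < s ∧ ‖w‖ < s) ∧ (z ∉ closure (ball 0 r) ∨ w ∉ closure (ball 0 r)) := by
  rw [Set.mem_sdiff, mk_mem_ball_zero, ← Prod.mk_zero_zero, ← ball_prod_same, closure_prod_eq,
    mem_prod, not_and_or]

theorem notMem_closure_ball_zero {E : Type*} [SeminormedAddCommGroup E] {z : E} {r : ℝ}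
    (h : r < ‖z‖) : z ∉ closure (ball 0 r) :=
  fun hz => (mem_closedBall_zero_iff.1 (closure_ball_subset_closedBall hz)).not_gt h

theorem bidisc_eq_ball (r : ℝ) : bidisc r = ball 0 r := by
  ext p
  exact mk_mem_ball_zero.symm

theorem closedBall_prod_sphere_subset {ε : ℝ} (hε : 0 < ε) :
    closedBall (0 : ℂ) 1 ×ˢ sphere (0 : ℂ) 1 ⊆ ball 0 (1 + ε) \ closure (ball 0 (1 - ε)) := by
  rintro ⟨z, ζ⟩ ⟨hz, hζ⟩
  rw [mem_closedBall_zero_iff] at hz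
  rw [mem_sphere_zero_iff_norm] at hζ
  exact mk_mem_ball_sdiff_closure_ball.2
    ⟨⟨by linarith, by linarith⟩, Or.inr (notMem_closure_ball_zero (by linarith))⟩

/-- `f (w, ζ) dw dζ` pulled back along `(θ, φ) ↦ (circleMap 0 1 θ, circleMap 0 1 φ)`. -/
noncomputable def torusDensity (f : ℂ × ℂ → ℂ) (x : ℝ × ℝ) : ℂ :=
  circleMap 0 1 x.1 * I * (circleMap 0 1 x.2 * I) * f (circleMap 0 1 x.1, circleMap 0 1 x.2)

theorem continuous_torusDensity {f : ℂ × ℂ → ℂ} (hf : ContinuousOn f (sphere 0 1 ×ˢ sphere 0 1)) :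
    Continuous (torusDensity f) :=
  (by fun_prop : Continuous fun x : ℝ × ℝ => circleMap 0 1 x.1 * I * (circleMap 0 1 x.2 * I)).mul
    (hf.comp_continuous (by fun_prop) fun x =>
      ⟨circleMap_mem_sphere 0 zero_le_one _, circleMap_mem_sphere 0 zero_le_one _⟩)

theorem circleIntegral_div_sub_eq_integral_torusDensity {f : ℂ × ℂ → ℂ}
    (hf : DifferentiableOn ℂ f (closedBall 0 1 ×ˢ sphere 0 1)) {p : ℂ × ℂ}
    (hp : p ∈ ball 0 1) :
    ∮ ζ in C(0, 1), f (p.1, ζ) / (ζ - p.2) = (2 * π * I)⁻¹ *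
      ∫ x, torusDensity f x * ((circleMap 0 1 x.1 - p.1)⁻¹ * (circleMap 0 1 x.2 - p.2)⁻¹)
        ∂(volume.restrict (Ioc 0 (2 * π))).prod (volume.restrict (Ioc 0 (2 * π))) := by
  rw [mk_mem_ball_zero] at hp
  have hne : ∀ θ (z : ℂ), ‖z‖ < 1 → circleMap 0 1 θ - z ≠ 0 := fun θ z hz h => by
    rw [← sub_eq_zero.1 h, norm_circleMap_zero] at hz
    simp at hz
  set H : ℝ × ℝ → ℂ := fun x => torusDensity f x *
    ((circleMap 0 1 x.1 - p.1)⁻¹ * (circleMap 0 1 x.2 - p.2)⁻¹) with hH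
  have hint : Integrable H
      ((volume.restrict (Ioc 0 (2 * π))).prod (volume.restrict (Ioc 0 (2 * π)))) := by
    refine Continuous.integrable_prod_restrict_Ioc (Continuous.mul
      (continuous_torusDensity (hf.continuousOn.mono (prod_mono sphere_subset_closedBall le_rfl)))
      (Continuous.mul ?_ ?_)) _ _ _ _
    · exact (by fun_prop : Continuous _).inv₀ fun x => hne _ _ hp.1
    · exact (by fun_prop : Continuous _).inv₀ fun x => hne _ _ hp.2
  calc ∮ ζ in C(0, 1), f (p.1, ζ) / (ζ - p.2)
      = ∮ ζ in C(0, 1), ((2 * π * I)⁻¹ * ∮ w in C(0, 1), f (w, ζ) / (w - p.1)) / (ζ - p.2) := by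
        refine circleIntegral.integral_congr zero_le_one fun ζ hζ => ?_
        rw [two_pi_I_inv_mul_circleIntegral_div_sub _ (mem_ball_zero_iff.2 hp.1)]
        exact hf.comp (by fun_prop) fun w hw => ⟨hw, hζ⟩
    _ = ∫ θ in 0..2 * π, ∫ φ in 0..2 * π, (2 * π * I)⁻¹ * H (φ, θ) := by
        simp only [circleIntegral, deriv_circleMap, smul_eq_mul, div_eq_mul_inv, hH, torusDensity,
          ← intervalIntegral.integral_const_mul, ← intervalIntegral.integral_mul_const]
        congr 1; funext θ; congr 1; funext φ; ring
    _ = _ := by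
        simp only [intervalIntegral.integral_of_le two_pi_pos.le, integral_const_mul]
        rw [integral_integral_symm (f := fun θ φ => H (φ, θ)) hint.swap]

noncomputable def cauchyIntegralSnd (f : ℂ × ℂ → ℂ) (p : ℂ × ℂ) : ℂ :=
  (2 * π * I)⁻¹ * ∮ ζ in C(0, 1), f (p.1, ζ) / (ζ - p.2)

theorem differentiableOn_cauchyIntegralSnd {f : ℂ × ℂ → ℂ}
    (hf : DifferentiableOn ℂ f (closedBall 0 1 ×ˢ sphere 0 1)) :
    DifferentiableOn ℂ (cauchyIntegralSnd f) (ball 0 1) := by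
  have hg := continuous_torusDensity
    (hf.continuousOn.mono (prod_mono sphere_subset_closedBall le_rfl))
  have hu : Measurable fun x : ℝ × ℝ => circleMap 0 1 x.1 := by fun_prop
  have hv : Measurable fun x : ℝ × ℝ => circleMap 0 1 x.2 := by fun_prop
  have hu₁ : ∀ x : ℝ × ℝ, 1 ≤ ‖circleMap 0 1 x.1‖ := fun x => by simp
  have hv₁ : ∀ x : ℝ × ℝ, 1 ≤ ‖circleMap 0 1 x.2‖ := fun x => by simp
  have hdiff := differentiableOn_integral_mul_inv_sub_mul_inv_sub
    (hg.integrable_prod_restrict_Ioc 0 (2 * π) 0 (2 * π)) hu hv hu₁ hv₁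
  refine ((hdiff.const_mul (2 * π * I)⁻¹).const_mul (2 * π * I)⁻¹).congr fun p hp => ?_
  rw [cauchyIntegralSnd, circleIntegral_div_sub_eq_integral_torusDensity hf hp]

theorem cauchyIntegralSnd_mk_eq {f : ℂ × ℂ → ℂ} {s : Set (ℂ × ℂ)} (hf : DifferentiableOn ℂ f s)
    {z w : ℂ} (hz : {z} ×ˢ closedBall 0 1 ⊆ s) (hw : w ∈ ball 0 1) :
    cauchyIntegralSnd f (z, w) = f (z, w) :=
  two_pi_I_inv_mul_circleIntegral_div_sub
    (hf.comp (by fun_prop) fun ζ hζ => hz ⟨rfl, hζ⟩) hw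

theorem eqOn_cauchyIntegralSnd {ε : ℝ} (hε : 0 < ε) {f : ℂ × ℂ → ℂ}
    (hf : DifferentiableOn ℂ f (ball 0 (1 + ε) \ closure (ball 0 (1 - ε)))) :
    EqOn (cauchyIntegralSnd f) f (ball 0 1 \ closure (ball 0 (1 - ε))) := by
  have hslice : ∀ z w : ℂ, z ∉ closure (ball 0 (1 - ε)) → ‖z‖ < 1 → w ∈ ball 0 1 →
      cauchyIntegralSnd f (z, w) = f (z, w) := fun z w hz hz₁ hw => by
    refine cauchyIntegralSnd_mk_eq hf ?_ hw
    rintro ⟨_, ζ⟩ ⟨rfl, hζ⟩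
    rw [mem_closedBall_zero_iff] at hζ
    exact mk_mem_ball_sdiff_closure_ball.2 ⟨⟨by linarith, by linarith⟩, Or.inl hz⟩
  rintro ⟨z, w⟩ hp
  obtain ⟨⟨hz₁, hw₁⟩, hz | hw⟩ := mk_mem_ball_sdiff_closure_ball.1 hp
  · exact hslice z w hz hz₁ (mem_ball_zero_iff.2 hw₁)
  refine eqOn_ball_of_eqOn_ball_sdiff_closedBall (g := fun z' => cauchyIntegralSnd f (z', w))
    (h := fun z' => f (z', w)) ?_ ?_ (show 1 - ε < 1 by linarith) ?_ (mem_ball_zero_iff.2 hz₁)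
  · exact (differentiableOn_cauchyIntegralSnd (hf.mono (closedBall_prod_sphere_subset hε))).comp
      (by fun_prop) fun z' hz' => mk_mem_ball_zero.2 ⟨mem_ball_zero_iff.1 hz', hw₁⟩
  · exact hf.comp (by fun_prop) fun z' hz' => mk_mem_ball_sdiff_closure_ball.2
      ⟨⟨by linarith [mem_ball_zero_iff.1 hz'], by linarith⟩, Or.inr hw⟩
  · rintro z' ⟨hz', hz'r⟩
    rw [mem_closedBall_zero_iff, not_le] at hz'r
    exact hslice z' w (notMem_closure_ball_zero hz'r) (mem_ball_zero_iff.1 hz')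
      (mem_ball_zero_iff.2 hw₁)

/-- **Hartogs' original extension phenomenon on the bidisc.** Let `ε > 0` and let `f` be
holomorphic on `U = Δ²(1+ε) \ closure (Δ²(1−ε))`. The function
`F(z₁,z₂) = (1/(2πi)) ∮_{|ζ|=1} f(z₁,ζ)/(ζ − z₂) dζ` is holomorphic on the unit bidisc
`Δ²` and agrees with `f` for `1−ε < |z₁| < 1`, `|z₂| < 1`; in particular `f` extends
holomorphically to `Δ²(1+ε)`. -/
theorem hartogs_bidisc_extension (ε : ℝ) (hε : 0 < ε) (f F : ℂ × ℂ → ℂ)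
    (hf : DifferentiableOn ℂ f (bidisc (1 + ε) \ closure (bidisc (1 - ε))))
    (hF : ∀ p : ℂ × ℂ,
      F p = (2 * Real.pi * Complex.I)⁻¹ * ∮ ζ in C(0, 1), f (p.1, ζ) / (ζ - p.2)) :
    DifferentiableOn ℂ F (bidisc 1) ∧
    (∀ p : ℂ × ℂ, 1 - ε < ‖p.1‖ → ‖p.1‖ < 1 →
      ‖p.2‖ < 1 → F p = f p) ∧
    ∃ G : ℂ × ℂ → ℂ, DifferentiableOn ℂ G (bidisc (1 + ε)) ∧
      Set.EqOn G f (bidisc (1 + ε) \ closure (bidisc (1 - ε))) := by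
  simp only [bidisc_eq_ball] at hf ⊢
  obtain rfl : F = cauchyIntegralSnd f := funext hF
  have hFf := eqOn_cauchyIntegralSnd hε hf
  have hFdiff := differentiableOn_cauchyIntegralSnd (hf.mono (closedBall_prod_sphere_subset hε))
  refine ⟨hFdiff, fun p h₁ h₂ h₃ => hFf ⟨?_, ?_⟩, ?_⟩
  · exact mk_mem_ball_zero.2 ⟨h₂, h₃⟩
  · exact notMem_closure_ball_zero (h₁.trans_le (norm_fst_le p))
  obtain ⟨G, hG, hGf⟩ := exists_differentiableOn_union_eqOn isOpen_ball
    (isOpen_ball.sdiff isClosed_closure) hFdiff hf fun p hp => hFf ⟨hp.1, hp.2.2⟩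
  refine ⟨G, hG.mono fun p hp => ?_, hGf⟩
  by_cases hp₁ : p ∈ ball 0 1
  · exact Or.inl hp₁
  · rw [mem_ball_zero_iff, not_lt] at hp₁
    exact Or.inr ⟨hp, notMem_closure_ball_zero (by linarith)⟩
end

section
/- Let n ≥ 2, let Ω ⊆ ℂⁿ be a domain, and let f be holomorphic on Ω with f(a) = 0 for some a ∈ Ω. Then a is not an isolated zero of f: every neighborhood of a contains a point z ≠ a with f(z) = 0. -/
/-!
Restrict `f` to a complex plane through `a`: this gives a holomorphic `F (w, μ)` of two variables
vanishing at the origin. If the origin were an isolated zero, `‖F (·, 0)‖` would be positive on a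
small circle `‖w‖ = r`, and by compactness `‖F (·, μ)‖` would still exceed `‖F (0, μ)‖ → 0` on that
circle for all small `μ`. But for `μ ≠ 0` the function `F (·, μ)` has no zero on the closed disc,
so by the minimum modulus principle its modulus at the centre is at least its minimum on the circle.
-/

open Filter Metric Topology

theorem Complex.exists_mem_sphere_norm_le_of_forall_ne_zero {g : ℂ → ℂ} {c : ℂ} {r : ℝ}
    (hr : 0 < r) (hg : DifferentiableOn ℂ g (closedBall c r))
    (hg₀ : ∀ z ∈ closedBall c r, g z ≠ 0) :
    ∃ w ∈ sphere c r, ‖g w‖ ≤ ‖g c‖ := by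
  have hd : DiffContOnCl ℂ (fun z => (g z)⁻¹) (ball c r) := by
    refine DifferentiableOn.diffContOnCl ?_
    rw [closure_ball c hr.ne']
    exact hg.inv hg₀
  obtain ⟨w, hw, hmax⟩ :=
    Complex.exists_mem_frontier_isMaxOn_norm isBounded_ball (nonempty_ball.2 hr) hd
  rw [frontier_ball c hr.ne'] at hw
  have hc : ‖(g c)⁻¹‖ ≤ ‖(g w)⁻¹‖ := hmax (subset_closure (mem_ball_self hr))
  rw [norm_inv, norm_inv] at hc
  exact ⟨w, hw, (inv_le_inv₀ (norm_pos_iff.2 (hg₀ c (mem_closedBall_self hr.le)))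
    (norm_pos_iff.2 (hg₀ w (sphere_subset_closedBall hw)))).1 hc⟩

theorem IsCompact.eventually_forall_norm_lt_of_eq_zero {X Y E : Type*} [TopologicalSpace X]
    [TopologicalSpace Y] [NormedAddCommGroup E] {K : Set X} (hK : IsCompact K) {F : X × Y → E}
    {x₀ : X} {y₀ : Y} (hx₀ : ContinuousAt F (x₀, y₀)) (hF₀ : F (x₀, y₀) = 0)
    (hFK : ∀ x ∈ K, ContinuousAt F (x, y₀) ∧ F (x, y₀) ≠ 0) :
    ∀ᶠ y in 𝓝 y₀, ∀ x ∈ K, ‖F (x₀, y)‖ < ‖F (x, y)‖ := by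
  refine hK.eventually_forall_of_forall_eventually fun x hx => ?_
  have hcentre : Tendsto (fun q : Y × X => ‖F (x₀, q.1)‖) (𝓝 (y₀, x)) (𝓝 0) := by
    simpa [hF₀] using (hx₀.comp_of_eq (f := fun q : Y × X => (x₀, q.1)) (x := (y₀, x))
      (by fun_prop) rfl).norm.tendsto
  have hside : Tendsto (fun q : Y × X => ‖F (q.2, q.1)‖) (𝓝 (y₀, x)) (𝓝 ‖F (x, y₀)‖) :=
    ((hFK x hx).1.comp_of_eq (f := Prod.swap) (by fun_prop) rfl).norm.tendsto
  exact hcentre.eventually_lt hside (norm_pos_iff.2 (hFK x hx).2)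

theorem frequently_eq_zero_nhdsNE_of_prod {F : ℂ × ℂ → ℂ} {p : ℂ × ℂ}
    (hF : ∀ᶠ q in 𝓝 p, DifferentiableAt ℂ F q) (hp : F p = 0) :
    ∃ᶠ q in 𝓝[≠] p, F q = 0 := by
  obtain ⟨z, μ⟩ := p
  by_contra h
  rw [not_frequently, eventually_nhdsWithin_iff] at h
  obtain ⟨ε, hε, hball⟩ := eventually_nhds_iff_ball.1 (hF.and h)
  set r := ε / 2
  have hr : 0 < r := half_pos hε
  have hslice : ∀ w ∈ closedBall z r, ∀ ν ∈ ball μ r, (w, ν) ∈ ball (z, μ) ε := by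
    intro w hw ν hν
    rw [mem_ball, Prod.dist_eq, max_lt_iff]
    exact ⟨(mem_closedBall.1 hw).trans_lt (half_lt_self hε),
      (mem_ball.1 hν).trans (half_lt_self hε)⟩
  have hcircle : ∀ᶠ ν in 𝓝 μ, ∀ w ∈ sphere z r, ‖F (z, ν)‖ < ‖F (w, ν)‖ := by
    refine (isCompact_sphere z r).eventually_forall_norm_lt_of_eq_zero
      (hball _ (mem_ball_self hε)).1.continuousAt hp fun w hw => ?_
    have hwμ := hball _ (hslice w (sphere_subset_closedBall hw) μ (mem_ball_self hr))
    refine ⟨hwμ.1.continuousAt, hwμ.2 fun h => hr.ne ?_⟩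
    rw [Set.mem_singleton_iff, Prod.mk.injEq] at h
    simpa [h.1] using hw
  obtain ⟨ν, ⟨hνcircle, hνμ⟩, hν⟩ :=
    (((hcircle.and (ball_mem_nhds μ hr)).filter_mono nhdsWithin_le_nhds).and
      self_mem_nhdsWithin).exists (f := 𝓝[≠] μ)
  have hslice_ν : ∀ w ∈ closedBall z r, (w, ν) ∈ ball (z, μ) ε := fun w hw => hslice w hw ν hνμ
  obtain ⟨w, hw, hle⟩ :=
    Complex.exists_mem_sphere_norm_le_of_forall_ne_zero (g := fun w => F (w, ν)) hr
      (fun w hw => ((hball _ (hslice_ν w hw)).1.comp w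
        (differentiableAt_id.prodMk (differentiableAt_const ν))).differentiableWithinAt)
      (fun w hw => (hball _ (hslice_ν w hw)).2 fun h => hν (Prod.ext_iff.1 h).2)
  exact (hνcircle w hw).not_ge hle

theorem frequently_eq_zero_nhdsNE_of_one_lt_rank {E : Type*} [NormedAddCommGroup E]
    [NormedSpace ℂ E] (hE : 1 < Module.rank ℂ E) {f : E → ℂ} {a : E}
    (hf : ∀ᶠ z in 𝓝 a, DifferentiableAt ℂ f z) (ha : f a = 0) :
    ∃ᶠ z in 𝓝[≠] a, f z = 0 := by
  have : Nontrivial E := rank_pos_iff_nontrivial.1 (zero_lt_one.trans hE)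
  obtain ⟨u, hu⟩ := exists_ne (0 : E)
  obtain ⟨v, huv⟩ := exists_linearIndependent_pair_of_one_lt_rank hE hu
  set φ : ℂ × ℂ → E := fun q => a + q.1 • u + q.2 • v with hφ
  have hφ0 : φ 0 = a := by simp [hφ]
  have hφd : Differentiable ℂ φ := by fun_prop
  have hφne : ∀ q ≠ 0, φ q ≠ a := by
    intro q hq h
    have := LinearIndependent.pair_iff.1 huv q.1 q.2 (by simpa [hφ, add_assoc] using h)
    exact hq (Prod.ext this.1 this.2)
  have hφt : Tendsto φ (𝓝 0) (𝓝 a) := hφ0 ▸ hφd.continuous.continuousAt.tendsto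
  have hφt' : Tendsto φ (𝓝[≠] 0) (𝓝[≠] a) :=
    tendsto_nhdsWithin_iff.2
      ⟨hφt.mono_left nhdsWithin_le_nhds, eventually_nhdsWithin_of_forall hφne⟩
  refine hφt'.frequently (frequently_eq_zero_nhdsNE_of_prod (F := f ∘ φ) ?_ (by simp [hφ0, ha]))
  exact (hφt.eventually hf).mono fun q hq => hq.comp q (hφd q)

theorem no_isolated_zero_general (n : ℕ) (hn : 2 ≤ n) (Ω : Set (Fin n → ℂ))
    (hΩopen : IsOpen Ω)
    (f : (Fin n → ℂ) → ℂ) (hf : DifferentiableOn ℂ f Ω)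
    (a : Fin n → ℂ) (ha : a ∈ Ω) (hfa : f a = 0) :
    ∀ V ∈ nhds a, ∃ z ∈ V, z ≠ a ∧ f z = 0 := by
  have hrank : 1 < Module.rank ℂ (Fin n → ℂ) := by
    rw [rank_fin_fun]
    exact_mod_cast hn
  have hzeros := frequently_nhdsWithin_iff.1 <| frequently_eq_zero_nhdsNE_of_one_lt_rank hrank
    (hf.eventually_differentiableAt (hΩopen.mem_nhds ha)) hfa
  intro V hV
  obtain ⟨z, ⟨hfz, hza⟩, hzV⟩ := (hzeros.and_eventually hV).exists
  exact ⟨z, hzV, hza, hfz⟩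

/-- **No isolated zeros in several variables.** Let `n ≥ 2`, `Ω ⊆ ℂⁿ` a domain, `f`
holomorphic on `Ω` with `f a = 0` for some `a ∈ Ω`. Then `a` is not an isolated zero:
every neighbourhood of `a` contains a point `z ≠ a` with `f z = 0`. -/
theorem no_isolated_zero (n : ℕ) (hn : 2 ≤ n) (Ω : Set (Fin n → ℂ))
    (hΩopen : IsOpen Ω) (hΩconn : IsConnected Ω)
    (f : (Fin n → ℂ) → ℂ) (hf : DifferentiableOn ℂ f Ω)
    (a : Fin n → ℂ) (ha : a ∈ Ω) (hfa : f a = 0) :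
    ∀ V ∈ nhds a, ∃ z ∈ V, z ≠ a ∧ f z = 0 :=
  no_isolated_zero_general n hn Ω hΩopen f hf a ha hfa
end

section
/- Let n ≥ 2, let Ω ⊆ ℂⁿ be a domain, and let f be holomorphic on Ω with f not identically zero. Then the zero set N(f) = {z ∈ Ω : f(z) = 0}, if nonempty, is not compact. -/
/-!
Let `b` maximise `(Re z₀, Re z₁)` lexicographically on the compact zero set `K`. If `f`
vanished near `b` on the line `b + ℂ e₁`, moving along that line would stay in `K` and increase
`Re z₁`. Otherwise `b` is an isolated zero of `f` on this line, so by the minimum modulus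
principle (Hurwitz) every nearby parallel line `b + t e₀ + ℂ e₁` also meets `K`; for `t > 0`
this increases `Re z₀`.
-/

open Metric Set Filter Topology

theorem IsCompact.exists_isMaxOn_lex {X : Type*} [TopologicalSpace X] {K : Set X}
    (hK : IsCompact K) (hne : K.Nonempty) {p q : X → ℝ} (hp : Continuous p)
    (hq : Continuous q) :
    ∃ b ∈ K, (∀ z ∈ K, p z ≤ p b) ∧ ∀ z ∈ K, p z = p b → q z ≤ q b := by
  obtain ⟨a, haK, ha⟩ := hK.exists_isMaxOn hne hp.continuousOn
  have hK' : IsCompact (K ∩ p ⁻¹' {p a}) := hK.inter_right (isClosed_singleton.preimage hp)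
  obtain ⟨b, ⟨hbK, hba⟩, hb⟩ := hK'.exists_isMaxOn ⟨a, haK, rfl⟩ hq.continuousOn
  rw [mem_preimage, mem_singleton_iff] at hba
  exact ⟨b, hbK, fun z hz => hba ▸ ha hz, fun z hz hzb => hb ⟨hz, hzb.trans hba⟩⟩

theorem Complex.exists_pos_real_of_eventually {P : ℂ → Prop} (h : ∀ᶠ z in 𝓝 0, P z) :
    ∃ t : ℝ, 0 < t ∧ P t := by
  have hreal : ∀ᶠ t : ℝ in 𝓝[>] 0, P t :=
    nhdsWithin_le_nhds (Complex.continuous_ofReal.tendsto' 0 0 Complex.ofReal_zero h)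
  exact (hreal.and self_mem_nhdsWithin).exists.imp fun t ht => ⟨ht.2, ht.1⟩

theorem DiffContOnCl.exists_mem_ball_eq_zero {g : ℂ → ℂ} {c : ℂ} {r : ℝ}
    (hg : DiffContOnCl ℂ g (ball c r)) (hr : 0 < r)
    (h : ∀ z ∈ sphere c r, ‖g c‖ < ‖g z‖) : ∃ z ∈ ball c r, g z = 0 := by
  by_contra! hball
  have hclosedBall : ∀ z ∈ closedBall c r, g z ≠ 0 := by
    intro z hz
    rcases (mem_closedBall.1 hz).lt_or_eq with hz | hz
    · exact hball z hz
    · exact norm_pos_iff.1 ((norm_nonneg _).trans_lt (h z hz))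
  have hinv : DiffContOnCl ℂ (fun z => (g z)⁻¹) (ball c r) :=
    hg.inv (by rwa [closure_ball c hr.ne'])
  obtain ⟨z, hz, hmax⟩ :=
    Complex.exists_mem_frontier_isMaxOn_norm isBounded_ball (nonempty_ball.2 hr) hinv
  rw [frontier_ball c hr.ne'] at hz
  have hle : ‖(g c)⁻¹‖ ≤ ‖(g z)⁻¹‖ := hmax (subset_closure (mem_ball_self hr))
  rw [norm_inv, norm_inv,
    inv_le_inv₀ (norm_pos_iff.2 (hclosedBall c (mem_closedBall_self hr.le)))
      (norm_pos_iff.2 (hclosedBall z (sphere_subset_closedBall hz)))] at hle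
  exact (h z hz).not_ge hle

section

variable {E : Type*} [NormedAddCommGroup E] [NormedSpace ℂ E]

theorem IsOpen.eventually_add_smul_mem {U : Set E} (hU : IsOpen U) {a : E} (ha : a ∈ U)
    (w : E) : ∀ᶠ η in 𝓝 (0 : ℂ), a + η • w ∈ U :=
  (Continuous.tendsto' (by fun_prop) 0 a (by simp)).eventually (hU.mem_nhds ha)

theorem DifferentiableOn.eventually_exists_zero_on_parallel_line {f : E → ℂ} {U : Set E}
    (hf : DifferentiableOn ℂ f U) (hU : IsOpen U) {a w : E} (ha : a ∈ U) (hfa : f a = 0)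
    (hw : ¬ ∀ᶠ η in 𝓝 (0 : ℂ), f (a + η • w) = 0) :
    ∀ᶠ b in 𝓝 a, ∃ η : ℂ, b + η • w ∈ U ∧ f (b + η • w) = 0 := by
  have hcont : ∀ z ∈ U, ContinuousAt f z := fun z hz =>
    hf.continuousOn.continuousAt (hU.mem_nhds hz)
  have hline : Continuous fun p : E × ℂ => p.1 + p.2 • w := by fun_prop
  have hslice := hU.eventually_add_smul_mem ha w
  have hiso : ∀ᶠ η in 𝓝[≠] (0 : ℂ), f (a + η • w) ≠ 0 :=
    (DifferentiableOn.analyticAt (hf.comp (by fun_prop) (mapsTo_preimage _ U)) hslice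
      |>.eventually_eq_zero_or_eventually_ne_zero).resolve_left hw
  obtain ⟨ε, hε, hnear⟩ :=
    Metric.eventually_nhds_iff.1 ((eventually_nhdsWithin_iff.1 hiso).and hslice)
  have hr : 0 < ε / 2 := half_pos hε
  have hmem : ∀ η ∈ closedBall (0 : ℂ) (ε / 2), a + η • w ∈ U := fun η hη =>
    (hnear ((mem_closedBall.1 hη).trans_lt (half_lt_self hε))).2
  have hsphere : ∀ η ∈ sphere (0 : ℂ) (ε / 2), f (a + η • w) ≠ 0 := by
    intro η hη
    refine (hnear ((mem_sphere.1 hη).trans_lt (half_lt_self hε))).1 ?_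
    rintro rfl
    simp [hr.ne] at hη
  have hnearU : ∀ᶠ b in 𝓝 a, ∀ η ∈ closedBall (0 : ℂ) (ε / 2), b + η • w ∈ U :=
    (isCompact_closedBall 0 _).eventually_forall_of_forall_eventually fun η hη =>
      hline.continuousAt.eventually_mem (hU.mem_nhds (hmem η hη))
  -- At `b = a` this is `0 < ‖f (a + η • w)‖`; strict inequalities persist uniformly over the
  -- compact circle.
  have hnearMin : ∀ᶠ b in 𝓝 a, ∀ η ∈ sphere (0 : ℂ) (ε / 2), ‖f b‖ < ‖f (b + η • w)‖ :=
    (isCompact_sphere 0 _).eventually_forall_of_forall_eventually fun η hη =>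
      ContinuousAt.eventually_lt (x₀ := (a, η))
        (ContinuousAt.comp (x := (a, η)) (f := Prod.fst) (hcont a ha).norm continuousAt_fst)
        (ContinuousAt.comp (x := (a, η)) (f := fun p : E × ℂ => p.1 + p.2 • w)
          (hcont _ (hmem η (sphere_subset_closedBall hη))).norm hline.continuousAt)
        (by simpa [hfa] using hsphere η hη)
  filter_upwards [hnearU, hnearMin] with b hbU hbMin
  have hdiff : DiffContOnCl ℂ (fun η : ℂ => f (b + η • w)) (ball 0 (ε / 2)) := by
    apply DifferentiableOn.diffContOnCl
    rw [closure_ball 0 hr.ne']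
    exact hf.comp (by fun_prop) hbU
  obtain ⟨η, hη, hzero⟩ := hdiff.exists_mem_ball_eq_zero hr (by simpa using hbMin)
  exact ⟨η, hbU η (ball_subset_closedBall hη), hzero⟩

theorem DifferentiableOn.not_isCompact_zeroSet {f : E → ℂ} {U : Set E}
    (hf : DifferentiableOn ℂ f U) (hU : IsOpen U) (φ ψ : E →L[ℂ] ℂ) {u v : E}
    (hφu : φ u = 1) (hφv : φ v = 0) (hψv : ψ v = 1) (hne : {z ∈ U | f z = 0}.Nonempty) :
    ¬ IsCompact {z ∈ U | f z = 0} := by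
  intro hK
  obtain ⟨b, ⟨hbU, hfb⟩, hbMax, hbMax'⟩ := hK.exists_isMaxOn_lex hne
    (Complex.continuous_re.comp φ.continuous) (Complex.continuous_re.comp ψ.continuous)
  by_cases hslice : ∀ᶠ η in 𝓝 (0 : ℂ), f (b + η • v) = 0
  · obtain ⟨t, ht, hmem⟩ :=
      Complex.exists_pos_real_of_eventually ((hU.eventually_add_smul_mem hbU v).and hslice)
    have hle := hbMax' _ hmem (by simp [hφv])
    simp only [Function.comp_apply, map_add, map_smul, hψv, smul_eq_mul, mul_one,
      Complex.add_re, Complex.ofReal_re] at hle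
    linarith
  · have hshift : ∀ᶠ s in 𝓝 (0 : ℂ),
        ∃ η : ℂ, b + s • u + η • v ∈ U ∧ f (b + s • u + η • v) = 0 :=
      (Continuous.tendsto' (by fun_prop) 0 b (by simp)).eventually
        (hf.eventually_exists_zero_on_parallel_line hU hbU hfb hslice)
    obtain ⟨t, ht, η, hmem, hzero⟩ := Complex.exists_pos_real_of_eventually hshift
    have hle := hbMax _ ⟨hmem, hzero⟩
    simp only [Function.comp_apply, map_add, map_smul, hφu, hφv, smul_eq_mul, mul_one,
      mul_zero, add_zero, Complex.add_re, Complex.ofReal_re] at hle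
    linarith

end

theorem zero_set_not_compact_general (n : ℕ) (hn : 2 ≤ n) (Ω : Set (Fin n → ℂ))
    (hΩopen : IsOpen Ω)
    (f : (Fin n → ℂ) → ℂ) (hf : DifferentiableOn ℂ f Ω)
    (hne : {z ∈ Ω | f z = 0}.Nonempty) :
    ¬ IsCompact {z ∈ Ω | f z = 0} := by
  obtain ⟨m, rfl⟩ : ∃ m, n = m + 2 := ⟨n - 2, by omega⟩
  refine hf.not_isCompact_zeroSet hΩopen (ContinuousLinearMap.proj 0)
    (ContinuousLinearMap.proj 1) (u := Pi.single 0 1) (v := Pi.single 1 1) ?_ ?_ ?_ hne <;> simp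

/-- **Zero sets are not compact.** Let `n ≥ 2`, `Ω ⊆ ℂⁿ` a domain and `f` holomorphic on
`Ω`, not identically zero. Then the zero set `N(f) = {z ∈ Ω : f z = 0}`, if nonempty,
is not compact. -/
theorem zero_set_not_compact (n : ℕ) (hn : 2 ≤ n) (Ω : Set (Fin n → ℂ))
    (hΩopen : IsOpen Ω) (hΩconn : IsConnected Ω)
    (f : (Fin n → ℂ) → ℂ) (hf : DifferentiableOn ℂ f Ω)
    (hfne : ∃ z ∈ Ω, f z ≠ 0)
    (hne : {z ∈ Ω | f z = 0}.Nonempty) :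
    ¬ IsCompact {z ∈ Ω | f z = 0} :=
  zero_set_not_compact_general n hn Ω hΩopen f hf hne
end

section
/- Let n ≥ 2, let Ω ⊆ ℂⁿ be a domain, and let f be holomorphic on Ω with f not identically zero. Then the complement Ω \ N(f) of the zero set N(f) = {z ∈ Ω : f(z) = 0} is a nonempty connected open set. -/
open Set Metric Filter Topology

/-!
On the complex line through two points of a convex open set, `f` is a one-variable holomorphic
function, so its zeros there are countable, and a connected open subset of the plane stays
connected after removing a countable set. Hence `{f ≠ 0}` is connected inside every ball of `Ω`.
The identity theorem, also obtained along complex lines, makes `{f ≠ 0}` dense in `Ω`, and a dense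
subset of a connected set that is connected near every point is itself connected.
-/

theorem IsPreconnected.of_subset_closure_of_forall_nhds {X : Type*} [TopologicalSpace X]
    {Ω S : Set X} (hΩ : IsPreconnected Ω) (hSΩ : S ⊆ Ω) (hΩS : Ω ⊆ closure S)
    (hloc : ∀ p ∈ Ω, ∃ N ∈ 𝓝 p, IsPreconnected (N ∩ S)) : IsPreconnected S := by
  rw [isPreconnected_iff_subset_of_disjoint] at hΩ ⊢
  intro u v hu hv hSuv hSuv'
  set U := {p | ∀ᶠ x in 𝓝 p, x ∈ S → x ∈ u}
  set V := {p | ∀ᶠ x in 𝓝 p, x ∈ S → x ∈ v}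
  have hΩUV : Ω ⊆ U ∪ V := by
    intro p hp
    obtain ⟨N, hN, hNS⟩ := hloc p hp
    rcases isPreconnected_iff_subset_of_disjoint.mp hNS u v hu hv
        (inter_subset_right.trans hSuv)
        (subset_empty_iff.mp (hSuv' ▸ inter_subset_inter_left _ inter_subset_right))
      with h | h
    · exact Or.inl (mem_of_superset hN fun x hxN hxS => h ⟨hxN, hxS⟩)
    · exact Or.inr (mem_of_superset hN fun x hxN hxS => h ⟨hxN, hxS⟩)
  have hΩUV' : Ω ∩ (U ∩ V) = ∅ := by
    refine eq_empty_of_forall_notMem fun p ⟨hp, hpU, hpV⟩ => ?_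
    obtain ⟨x, hxS, hxSu, hxSv⟩ :=
      ((mem_closure_iff_frequently.mp (hΩS hp)).and_eventually (hpU.and hpV)).exists
    exact (hSuv' ▸ ⟨hxS, hxSu hxS, hxSv hxS⟩ : x ∈ (∅ : Set X))
  rcases hΩ U V isOpen_setOfPred_eventually_nhds isOpen_setOfPred_eventually_nhds hΩUV hΩUV'
    with h | h
  · exact Or.inl fun s hs => (h (hSΩ hs)).self_of_nhds hs
  · exact Or.inr fun s hs => (h (hSΩ hs)).self_of_nhds hs

section CountableComplement

variable {E : Type*} [NormedAddCommGroup E] [InnerProductSpace ℝ E]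

theorem Set.Countable.isPathConnected_ball_diff_of_one_lt_rank (h : 1 < Module.rank ℝ E)
    {Z : Set E} (hZ : Z.Countable) (c : E) {r : ℝ} (hr : 0 < r) :
    IsPathConnected (ball c r \ Z) := by
  set e := OpenPartialHomeomorph.univBall c r
  have he : Function.Injective e := Set.injOn_univ.mp
    (OpenPartialHomeomorph.univBall_source c r ▸ e.injOn)
  have hrange : range e = ball c r := by
    rw [← image_univ, ← OpenPartialHomeomorph.univBall_source c r, e.image_source_eq_target,
      OpenPartialHomeomorph.univBall_target c hr]
  rw [← hrange, ← image_compl_preimage]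
  exact ((hZ.preimage he).isPathConnected_compl_of_one_lt_rank h).image
    (OpenPartialHomeomorph.continuous_univBall c r)

theorem IsOpen.isPreconnected_diff_countable (h : 1 < Module.rank ℝ E) {U Z : Set E}
    (hUo : IsOpen U) (hU : IsPreconnected U) (hZ : Z.Countable) : IsPreconnected (U \ Z) := by
  have : Nontrivial E := (rank_pos_iff_nontrivial (R := ℝ)).1 (zero_lt_one.trans h)
  refine hU.of_subset_closure_of_forall_nhds sdiff_subset
    (by simpa only [sdiff_eq] using (hZ.dense_compl ℝ).open_subset_closure_inter hUo) ?_
  intro p hp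
  obtain ⟨r, hr, hrU⟩ := Metric.isOpen_iff.mp hUo p hp
  refine ⟨ball p r, ball_mem_nhds p hr, ?_⟩
  rw [← inter_sdiff_assoc, inter_eq_left.mpr hrU]
  exact (hZ.isPathConnected_ball_diff_of_one_lt_rank h p hr).isConnected.isPreconnected

end CountableComplement

theorem AnalyticOnNhd.countable_inter_preimage_zero {𝕜 E : Type*} [NontriviallyNormedField 𝕜]
    [SecondCountableTopology 𝕜] [NormedAddCommGroup E] [NormedSpace 𝕜 E] {f : 𝕜 → E} {U : Set 𝕜}
    (hf : AnalyticOnNhd 𝕜 f U) (hU : IsPreconnected U) {x : 𝕜} (hx : x ∈ U) (hfx : f x ≠ 0) :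
    (U ∩ f ⁻¹' {0}).Countable := by
  have hdisc := isDiscrete_of_codiscreteWithin (s := f ⁻¹' {0})
    (hf.preimage_zero_mem_codiscreteWithin hfx hx ⟨⟨x, hx⟩, hU⟩)
  rw [inter_comm]
  exact (HereditarilyLindelofSpace.isLindelof _).countable_of_isDiscrete hdisc

section ComplexLine

variable {E : Type*} [NormedAddCommGroup E] [NormedSpace ℂ E] {B : Set E}

theorem Convex.setOf_add_smul_mem (hB : Convex ℝ B) (a v : E) :
    Convex ℝ {t : ℂ | a + t • v ∈ B} :=
  (hB.translate_preimage_right a).linear_preimage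
    ((LinearMap.toSpanSingleton ℂ E v).restrictScalars ℝ)

theorem IsOpen.setOf_add_smul_mem (hB : IsOpen B) (a v : E) : IsOpen {t : ℂ | a + t • v ∈ B} :=
  hB.preimage (by fun_prop)

theorem DifferentiableOn.analyticOnNhd_comp_add_smul {F : Type*} [NormedAddCommGroup F]
    [NormedSpace ℂ F] [CompleteSpace F] {f : E → F} (hf : DifferentiableOn ℂ f B) (hB : IsOpen B)
    (a v : E) : AnalyticOnNhd ℂ (fun t : ℂ => f (a + t • v)) {t | a + t • v ∈ B} :=
  (hf.comp (by fun_prop : Differentiable ℂ fun t : ℂ => a + t • v).differentiableOn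
    fun _ ht => ht).analyticOnNhd (hB.setOf_add_smul_mem a v)

variable {f : E → ℂ}

theorem DifferentiableOn.eqOn_zero_of_convex_of_eventuallyEq_zero (hf : DifferentiableOn ℂ f B)
    (hBc : Convex ℝ B) (hBo : IsOpen B) {a : E} (ha : a ∈ B) (hfa : f =ᶠ[𝓝 a] 0) :
    EqOn f 0 B := by
  intro b hb
  have hline : Tendsto (fun t : ℂ => a + t • (b - a)) (𝓝 0) (𝓝 a) := by
    simpa using (by fun_prop : Continuous fun t : ℂ => a + t • (b - a)).tendsto 0
  have hg := hf.analyticOnNhd_comp_add_smul hBo a (b - a)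
  simpa using hg.eqOn_zero_of_preconnected_of_eventuallyEq_zero
    (hBc.setOf_add_smul_mem a (b - a)).isPreconnected (z₀ := 0) (by simpa using ha)
    (hline.eventually hfa) (show a + (1 : ℂ) • (b - a) ∈ B by simpa using hb)

theorem DifferentiableOn.eqOn_zero_of_preconnected_of_eventuallyEq_zero
    (hf : DifferentiableOn ℂ f B) (hBo : IsOpen B) (hB : IsPreconnected B) {a : E} (ha : a ∈ B)
    (hfa : f =ᶠ[𝓝 a] 0) : EqOn f 0 B := by
  have hsub : B ⊆ {p | f =ᶠ[𝓝 p] 0} := by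
    refine hB.subset_of_closure_inter_subset isOpen_setOfPred_eventually_nhds ⟨a, ha, hfa⟩ ?_
    rintro p ⟨hpW, hpB⟩
    obtain ⟨r, hr, hrB⟩ := Metric.isOpen_iff.mp hBo p hpB
    obtain ⟨w, hwr, hwW⟩ := mem_closure_iff.mp hpW (ball p r) isOpen_ball (mem_ball_self hr)
    exact mem_of_superset (ball_mem_nhds p hr)
      ((hf.mono hrB).eqOn_zero_of_convex_of_eventuallyEq_zero (convex_ball p r) isOpen_ball hwr hwW)
  exact fun p hp => (hsub hp).self_of_nhds

theorem Convex.isPreconnected_setOf_ne_zero (hBc : Convex ℝ B) (hBo : IsOpen B)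
    (hf : DifferentiableOn ℂ f B) : IsPreconnected {x ∈ B | f x ≠ 0} := by
  refine isPreconnected_of_forall_pair fun a ⟨haB, hfa⟩ b ⟨hbB, hfb⟩ => ?_
  set D := {t : ℂ | a + t • (b - a) ∈ B}
  set g := fun t : ℂ => f (a + t • (b - a))
  have h0 : (0 : ℂ) ∈ D := by simpa [D] using haB
  have h1 : (1 : ℂ) ∈ D := by simpa [D] using hbB
  have hZ : (D ∩ g ⁻¹' {0}).Countable :=
    (hf.analyticOnNhd_comp_add_smul hBo a (b - a)).countable_inter_preimage_zero
      (hBc.setOf_add_smul_mem a (b - a)).isPreconnected h0 (by simpa [g] using hfa)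
  have hDZ : IsPreconnected (D \ (D ∩ g ⁻¹' {0})) :=
    (hBo.setOf_add_smul_mem a (b - a)).isPreconnected_diff_countable
      (by simp [Complex.rank_real_complex]) (hBc.setOf_add_smul_mem a (b - a)).isPreconnected hZ
  refine ⟨(fun t : ℂ => a + t • (b - a)) '' (D \ (D ∩ g ⁻¹' {0})), ?_,
    ⟨0, ⟨h0, fun h => ?_⟩, by simp⟩, ⟨1, ⟨h1, fun h => ?_⟩, by simp⟩,
    hDZ.image _ (by fun_prop)⟩
  · rintro _ ⟨t, ⟨htD, htZ⟩, rfl⟩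
    exact ⟨htD, fun h => htZ ⟨htD, h⟩⟩
  · exact hfa (by simpa [g] using h.2)
  · exact hfb (by simpa [g] using h.2)

end ComplexLine

theorem DifferentiableOn.subset_closure_setOf_ne_zero {E : Type*} [NormedAddCommGroup E]
    [NormedSpace ℂ E] {Ω : Set E} {f : E → ℂ} (hf : DifferentiableOn ℂ f Ω) (hΩo : IsOpen Ω)
    (hΩ : IsPreconnected Ω) {z₀ : E} (hz₀ : z₀ ∈ Ω) (hfz₀ : f z₀ ≠ 0) :
    Ω ⊆ closure {z ∈ Ω | f z ≠ 0} := by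
  intro p hp
  rw [mem_closure_iff_frequently]
  by_contra h
  have hfp : f =ᶠ[𝓝 p] 0 := by
    filter_upwards [not_frequently.mp h, hΩo.mem_nhds hp] with z hz hzΩ
    simpa [hzΩ] using hz
  exact hfz₀ (hf.eqOn_zero_of_preconnected_of_eventuallyEq_zero hΩo hΩ hp hfp hz₀)

theorem complement_zero_set_domain_general (n : ℕ) (Ω : Set (Fin n → ℂ))
    (hΩopen : IsOpen Ω) (hΩconn : IsConnected Ω)
    (f : (Fin n → ℂ) → ℂ) (hf : DifferentiableOn ℂ f Ω)
    (hfne : ∃ z ∈ Ω, f z ≠ 0) :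
    IsOpen (Ω \ {z ∈ Ω | f z = 0}) ∧ IsConnected (Ω \ {z ∈ Ω | f z = 0}) := by
  obtain ⟨z₀, hz₀, hfz₀⟩ := hfne
  have hS : Ω \ {z ∈ Ω | f z = 0} = {z ∈ Ω | f z ≠ 0} := by
    ext z
    simp +contextual
  rw [hS]
  refine ⟨hf.continuousOn.isOpen_inter_preimage hΩopen isOpen_compl_singleton, ⟨z₀, hz₀, hfz₀⟩,
    hΩconn.isPreconnected.of_subset_closure_of_forall_nhds (sep_subset _ _)
      (hf.subset_closure_setOf_ne_zero hΩopen hΩconn.isPreconnected hz₀ hfz₀) ?_⟩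
  intro p hp
  obtain ⟨r, hr, hrΩ⟩ := Metric.isOpen_iff.mp hΩopen p hp
  refine ⟨ball p r, ball_mem_nhds p hr, ?_⟩
  have hball : ball p r ∩ {z ∈ Ω | f z ≠ 0} = {z ∈ ball p r | f z ≠ 0} := by
    ext z
    simp +contextual [@hrΩ z]
  rw [hball]
  exact (convex_ball p r).isPreconnected_setOf_ne_zero isOpen_ball (hf.mono hrΩ)

/-- **Complement of the zero set is a domain.** Let `n ≥ 2`, `Ω ⊆ ℂⁿ` a domain and `f`
holomorphic on `Ω`, not identically zero. Then `Ω \ N(f)` is a nonempty connected open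
set, where `N(f) = {z ∈ Ω : f z = 0}`. -/
theorem complement_zero_set_domain (n : ℕ) (hn : 2 ≤ n) (Ω : Set (Fin n → ℂ))
    (hΩopen : IsOpen Ω) (hΩconn : IsConnected Ω)
    (f : (Fin n → ℂ) → ℂ) (hf : DifferentiableOn ℂ f Ω)
    (hfne : ∃ z ∈ Ω, f z ≠ 0) :
    IsOpen (Ω \ {z ∈ Ω | f z = 0}) ∧ IsConnected (Ω \ {z ∈ Ω | f z = 0}) :=
  complement_zero_set_domain_general n Ω hΩopen hΩconn f hf hfne
end

section
/- The power series f(z) = Σ_{n=0}^{∞} z^{2ⁿ} converges and defines a holomorphic function on the open unit disc Δ ⊆ ℂ, and f admits no holomorphic extension beyond Δ: for every connected open set U ⊆ ℂ with Δ ⊆ U and U ≠ Δ, there is no holomorphic function g on U with g = f on Δ. In other words, every boundary point of Δ is a singular point of f. -/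
/-!
The function `f z = ∑ z ^ 2 ^ k` satisfies `f z = ∑_{k<m} z ^ 2 ^ k + f (z ^ 2 ^ m)`, and
`f t → ∞` as `t → 1⁻` along the reals. Hence if `ζ ^ 2 ^ m = 1` then
`‖f (r ζ)‖ ≥ ‖f (r ^ 2 ^ m)‖ - m → ∞` as `r → 1⁻`, so `f` extends continuously to no
`2 ^ m`-th root of unity. These roots are dense in the unit circle, and a connected open set
strictly containing the disc meets the circle in a nonempty open subset, so it contains one of them.
-/

open Complex Filter Metric Set Topology

theorem IsPreconnected.inter_frontier_nonempty {X : Type*} [TopologicalSpace X] {s u : Set X}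
    (hs : IsPreconnected s) (hu : IsOpen u) (hsu : (s ∩ u).Nonempty) (hsu' : ¬s ⊆ u) :
    (s ∩ frontier u).Nonempty := by
  by_contra h
  refine hsu' (hs.subset_of_closure_inter_subset hu hsu ?_)
  rintro x ⟨hxu, hxs⟩
  rw [closure_eq_self_union_frontier] at hxu
  exact hxu.resolve_right fun hxu => h ⟨x, hxs, hxu⟩

theorem summable_pow_of_strictMono {R : Type*} [NormedRing R] [NormOneClass R] [CompleteSpace R]
    {n : ℕ → ℕ} (hn : StrictMono n) {x : R} (hx : ‖x‖ < 1) : Summable fun k => x ^ n k :=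
  .of_norm_bounded (summable_geometric_of_lt_one (norm_nonneg x) hx) fun _ =>
    (norm_pow_le x _).trans (pow_le_pow_of_le_one (norm_nonneg x) hx.le hn.le_apply)

theorem differentiableOn_tsum_pow_of_strictMono {n : ℕ → ℕ} (hn : StrictMono n) :
    DifferentiableOn ℂ (fun z : ℂ => ∑' k, z ^ n k) (ball 0 1) := by
  intro z hz
  obtain ⟨r, hzr, hr1⟩ := exists_between (mem_ball_zero_iff.1 hz)
  have hr0 : 0 ≤ r := (norm_nonneg z).trans hzr.le
  have hdiff : DifferentiableOn ℂ (fun z : ℂ => ∑' k, z ^ n k) (ball 0 r) := by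
    refine differentiableOn_tsum_of_summable_norm (summable_geometric_of_lt_one hr0 hr1)
      (fun k => (differentiable_pow _).differentiableOn) isOpen_ball fun k w hw => ?_
    rw [norm_pow]
    exact (pow_le_pow_left₀ (norm_nonneg w) (mem_ball_zero_iff.1 hw).le _).trans
      (pow_le_pow_of_le_one hr0 hr1.le hn.le_apply)
  exact (hdiff.differentiableAt (isOpen_ball.mem_nhds (mem_ball_zero_iff.2 hzr)))
    |>.differentiableWithinAt

theorem summable_pow_two_pow {R : Type*} [NormedRing R] [NormOneClass R] [CompleteSpace R]
    {x : R} (hx : ‖x‖ < 1) : Summable fun k => x ^ 2 ^ k :=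
  summable_pow_of_strictMono (pow_right_strictMono₀ one_lt_two) hx

noncomputable def lacunary (z : ℂ) : ℂ := ∑' k : ℕ, z ^ 2 ^ k

theorem lacunary_eq_sum_add_lacunary_pow {z : ℂ} (hz : ‖z‖ < 1) (m : ℕ) :
    lacunary z = ∑ k ∈ Finset.range m, z ^ 2 ^ k + lacunary (z ^ 2 ^ m) := by
  rw [lacunary, ← (summable_pow_two_pow hz).sum_add_tsum_nat_add m]
  simp only [lacunary, ← pow_mul, ← pow_add, add_comm m]

theorem tendsto_norm_lacunary_ofReal : Tendsto (fun t : ℝ => ‖lacunary t‖) (𝓝[<] 1) atTop := by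
  have hpartial (N : ℕ) : ∀ t ∈ Ioo (0 : ℝ) 1, ∑ k ∈ Finset.range N, t ^ 2 ^ k ≤ ‖lacunary t‖ := by
    intro t ht
    have hsum : Summable fun k : ℕ => t ^ 2 ^ k :=
      summable_pow_two_pow (by rw [Real.norm_of_nonneg ht.1.le]; exact ht.2)
    have hreal : lacunary t = ((∑' k : ℕ, t ^ 2 ^ k : ℝ) : ℂ) := by
      simp only [lacunary, ofReal_tsum, ofReal_pow]
    rw [hreal, norm_real, Real.norm_of_nonneg (tsum_nonneg fun k => pow_nonneg ht.1.le _)]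
    exact hsum.sum_le_tsum _ fun k _ => pow_nonneg ht.1.le _
  refine tendsto_atTop.2 fun M => ?_
  obtain ⟨N, hN⟩ := exists_nat_gt M
  have hlim : Tendsto (fun t : ℝ => ∑ k ∈ Finset.range N, t ^ 2 ^ k) (𝓝[<] 1) (𝓝 N) := by
    refine Tendsto.mono_left ?_ nhdsWithin_le_nhds
    simpa using (continuous_finsetSum (Finset.range N) fun k _ => continuous_pow (2 ^ k)).tendsto
      (1 : ℝ)
  filter_upwards [hlim.eventually (lt_mem_nhds hN), Ioo_mem_nhdsLT one_pos] with t hMt ht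
  exact hMt.le.trans (hpartial N t ht)

theorem norm_sum_pow_le_card {ι R : Type*} [SeminormedRing R] [NormOneClass R] {x : R}
    (hx : ‖x‖ ≤ 1) (s : Finset ι) (n : ι → ℕ) : ‖∑ i ∈ s, x ^ n i‖ ≤ s.card :=
  (norm_sum_le_of_le s fun i _ => (norm_pow_le x _).trans (pow_le_one₀ (norm_nonneg x) hx)).trans
    (by simp)

theorem ofReal_mul_mem_ball {ζ : ℂ} (hζ : ‖ζ‖ = 1) {r : ℝ} (hr : r ∈ Ioo (0 : ℝ) 1) :
    (r * ζ : ℂ) ∈ ball (0 : ℂ) 1 := by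
  rw [mem_ball_zero_iff, norm_mul, hζ, mul_one, norm_real, Real.norm_of_nonneg hr.1.le]
  exact hr.2

theorem tendsto_norm_lacunary_ofReal_mul {ζ : ℂ} {m : ℕ} (hζ : ζ ^ 2 ^ m = 1) :
    Tendsto (fun r : ℝ => ‖lacunary (r * ζ)‖) (𝓝[<] 1) atTop := by
  have hζ1 : ‖ζ‖ = 1 := norm_eq_one_of_pow_eq_one hζ (pow_ne_zero _ two_ne_zero)
  have hpow : Tendsto (fun r : ℝ => r ^ 2 ^ m) (𝓝[<] 1) (𝓝[<] 1) := by
    refine tendsto_nhdsWithin_iff.2 ⟨?_, ?_⟩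
    · simpa using ((continuous_pow (2 ^ m)).tendsto (1 : ℝ)).mono_left nhdsWithin_le_nhds
    · filter_upwards [Ioo_mem_nhdsLT one_pos] with r hr
      exact pow_lt_one₀ hr.1.le hr.2 (pow_ne_zero _ two_ne_zero)
  refine tendsto_atTop_mono' _ ?_
    (tendsto_atTop_add_const_right _ (-m : ℝ) (tendsto_norm_lacunary_ofReal.comp hpow))
  filter_upwards [Ioo_mem_nhdsLT one_pos] with r hr
  have hz := mem_ball_zero_iff.1 (ofReal_mul_mem_ball hζ1 hr)
  have hfun : lacunary (r ^ 2 ^ m : ℝ) =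
      lacunary (r * ζ) - ∑ k ∈ Finset.range m, (r * ζ) ^ 2 ^ k := by
    rw [lacunary_eq_sum_add_lacunary_pow hz m, mul_pow, hζ, mul_one, ofReal_pow]
    ring
  have hsum := norm_sum_pow_le_card hz.le (Finset.range m) (2 ^ ·)
  rw [Finset.card_range] at hsum
  dsimp only [Function.comp_apply]
  rw [hfun]
  linarith [norm_sub_le (lacunary (r * ζ)) (∑ k ∈ Finset.range m, (r * ζ) ^ 2 ^ k)]

theorem exists_pow_two_pow_eq_one_dist_lt {w : ℂ} (hw : ‖w‖ = 1) {δ : ℝ} (hδ : 0 < δ) :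
    ∃ m : ℕ, ∃ ζ : ℂ, ζ ^ 2 ^ m = 1 ∧ dist ζ w < δ := by
  obtain ⟨m, hm⟩ :=
    exists_pow_lt_of_lt_one (div_pos hδ Real.two_pi_pos) (by norm_num : (1 / 2 : ℝ) < 1)
  set ε : ℝ := 2 * Real.pi / 2 ^ m
  have hε : 0 < ε := by positivity
  have hεδ : ε < δ := calc
    ε = 2 * Real.pi * (1 / 2) ^ m := by rw [one_div_pow]; ring
    _ < 2 * Real.pi * (δ / (2 * Real.pi)) := by gcongr
    _ = δ := mul_div_cancel₀ _ Real.two_pi_pos.ne'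
  set θ := arg w
  set φ : ℝ := ε * ⌊θ / ε⌋
  refine ⟨m, exp (φ * I), ?_, ?_⟩
  · rw [← exp_nat_mul, ← exp_int_mul_two_pi_mul_I ⌊θ / ε⌋]
    simp only [φ, ε]
    push_cast
    field_simp
  · have hw' : exp (θ * I) = w := by
      simpa [hw] using norm_mul_exp_arg_mul_I w
    have hθφ : θ - φ = ε * Int.fract (θ / ε) := by
      rw [← Int.self_sub_floor, mul_sub, mul_div_cancel₀ _ hε.ne']
    calc dist (exp (φ * I)) w
        = ‖exp (I * (θ - φ : ℝ)) - 1‖ := by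
          rw [dist_eq_norm', ← hw', ← one_mul ‖exp (I * _) - 1‖, ← norm_exp_ofReal_mul_I φ,
            ← norm_mul, mul_sub, ← exp_add, mul_one]
          congr 3
          push_cast
          ring
      _ ≤ ‖θ - φ‖ := Real.norm_exp_I_mul_ofReal_sub_one_le
      _ < δ := by
          rw [hθφ, Real.norm_of_nonneg (mul_nonneg hε.le (Int.fract_nonneg _))]
          exact (mul_lt_of_lt_one_right hε (Int.fract_lt_one _)).trans hεδ

theorem not_continuousAt_of_eqOn_lacunary {g : ℂ → ℂ} (hg : EqOn g lacunary (ball 0 1)) {ζ : ℂ}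
    {m : ℕ} (hζ : ζ ^ 2 ^ m = 1) : ¬ContinuousAt g ζ := by
  intro hcont
  have hζ1 : ‖ζ‖ = 1 := norm_eq_one_of_pow_eq_one hζ (pow_ne_zero _ two_ne_zero)
  have hradial : Tendsto (fun r : ℝ => (r * ζ : ℂ)) (𝓝[<] 1) (𝓝 ζ) := by
    refine Tendsto.mono_left ?_ nhdsWithin_le_nhds
    simpa using (by fun_prop : Continuous fun r : ℝ => (r * ζ : ℂ)).tendsto 1
  refine not_tendsto_atTop_of_tendsto_nhds (hcont.tendsto.comp hradial).norm
    ((tendsto_norm_lacunary_ofReal_mul hζ).congr' ?_)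
  filter_upwards [Ioo_mem_nhdsLT one_pos] with r hr
  simp only [Function.comp_apply, hg (ofReal_mul_mem_ball hζ1 hr)]

/-- **The lacunary series `Σ z^(2ⁿ)` is singular at every boundary point.** The series
converges and defines a holomorphic function on the open unit disc, which admits no
holomorphic extension to any strictly larger connected open set. -/
theorem lacunary_series_no_extension :
    (∀ z ∈ Metric.ball (0 : ℂ) 1, Summable fun k : ℕ => z ^ (2 ^ k)) ∧
    DifferentiableOn ℂ (fun z : ℂ => ∑' k : ℕ, z ^ (2 ^ k)) (Metric.ball (0 : ℂ) 1) ∧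
    ∀ U : Set ℂ, IsOpen U → IsConnected U → Metric.ball (0 : ℂ) 1 ⊆ U →
      U ≠ Metric.ball (0 : ℂ) 1 →
      ¬ ∃ g : ℂ → ℂ, DifferentiableOn ℂ g U ∧
        Set.EqOn g (fun z : ℂ => ∑' k : ℕ, z ^ (2 ^ k)) (Metric.ball (0 : ℂ) 1) := by
  refine ⟨fun z hz => summable_pow_two_pow (mem_ball_zero_iff.1 hz),
    differentiableOn_tsum_pow_of_strictMono (pow_right_strictMono₀ one_lt_two), ?_⟩
  rintro U hUo hUc hsub hne ⟨g, hg, hgf⟩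
  obtain ⟨w, hwU, hw⟩ : (U ∩ sphere 0 1).Nonempty := by
    rw [← frontier_ball (0 : ℂ) one_ne_zero]
    exact hUc.isPreconnected.inter_frontier_nonempty isOpen_ball
      ⟨0, hsub (mem_ball_self one_pos), mem_ball_self one_pos⟩ fun hU => hne (hU.antisymm hsub)
  obtain ⟨δ, hδ, hδU⟩ := Metric.isOpen_iff.1 hUo w hwU
  obtain ⟨m, ζ, hζ, hζw⟩ := exists_pow_two_pow_eq_one_dist_lt (mem_sphere_zero_iff_norm.1 hw) hδ
  exact not_continuousAt_of_eqOn_lacunary hgf hζ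
    (hg.continuousOn.continuousAt (hUo.mem_nhds (hδU hζw)))
end

section
/- Let Ω ⊊ ℂ be a domain. Then there exists a set E ⊆ Ω which has no accumulation point in Ω (i.e., E is discrete and closed in Ω) and whose closure in ℂ contains the boundary ∂Ω of Ω. -/
/-!
Enumerate a countable dense subset of `∂Ω` so that every point recurs infinitely often, giving
boundary points `p k`, and pick `x k ∈ Ω` with `dist (x k) (p k) → 0`. Every boundary point is a
cluster point of `x`, so `∂Ω ⊆ closure (range x)`. Near a point `z ∈ Ω` with `ball z r ⊆ Ω` only the
finitely many `x k` with `dist (x k) (p k) ≥ r / 2` can lie in `ball z (r / 2)`, so `z` is not an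
accumulation point of `range x`.
-/

open Filter Metric Set Topology

theorem not_accPt_of_inter_finite {X : Type*} [TopologicalSpace X] [T1Space X] {z : X}
    {E V : Set X} (hV : V ∈ 𝓝 z) (hfin : (E ∩ V).Finite) : ¬AccPt z (𝓟 E) := by
  intro hacc
  refine Set.Infinite.of_accPt (x := z) (accPt_iff_frequently.2 ?_) hfin
  exact ((accPt_iff_frequently.1 hacc).and_eventually hV).mono
    fun y ⟨⟨hyz, hyE⟩, hyV⟩ ↦ ⟨hyz, hyE, hyV⟩

theorem TopologicalSpace.IsSeparable.exists_seq_mapClusterPt {X : Type*} [TopologicalSpace X]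
    [PseudoMetrizableSpace X] {S : Set X} (hS : IsSeparable S) (hne : S.Nonempty) :
    ∃ p : ℕ → X, (∀ k, p k ∈ S) ∧ ∀ q ∈ S, MapClusterPt q atTop p := by
  obtain ⟨t, htS, htc, hSt⟩ := hS.exists_countable_dense_subset
  obtain ⟨f, rfl⟩ := htc.exists_eq_range (hne.mono hSt |>.of_closure)
  refine ⟨fun k ↦ f (Nat.unpair k).1, fun k ↦ htS (mem_range_self _), fun q hq ↦ ?_⟩
  refine mapClusterPt_atTop_iff_forall_mem_closure.2 fun n ↦ closure_mono ?_ (hSt hq)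
  rintro _ ⟨m, rfl⟩
  exact ⟨Nat.pair m n, Nat.right_le_pair m n, by simp⟩

theorem MapClusterPt.of_tendsto_dist {X ι : Type*} [PseudoMetricSpace X] {l : Filter ι}
    {x p : ι → X} {q : X} (hp : MapClusterPt q l p)
    (hxp : Tendsto (fun k ↦ dist (x k) (p k)) l (𝓝 0)) : MapClusterPt q l x := by
  refine (nhds_basis_ball.mapClusterPt_iff_frequently).2 fun ε hε ↦ ?_
  have hp' := (nhds_basis_ball.mapClusterPt_iff_frequently).1 hp (ε / 2) (half_pos hε)
  refine (hp'.and_eventually (hxp.eventually (gt_mem_nhds (half_pos hε)))).mono ?_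
  rintro k ⟨hpk, hxk⟩
  rw [mem_ball] at hpk ⊢
  linarith [dist_triangle (x k) (p k) q]

theorem not_accPt_range_of_tendsto_dist {X ι : Type*} [MetricSpace X] {x p : ι → X} {z : X}
    {U : Set X} (hU : U ∈ 𝓝 z) (hpU : ∀ k, p k ∉ U)
    (hxp : Tendsto (fun k ↦ dist (x k) (p k)) cofinite (𝓝 0)) : ¬AccPt z (𝓟 (range x)) := by
  obtain ⟨r, hr, hrU⟩ := Metric.mem_nhds_iff.1 hU
  have hfar : ∀ᶠ k in cofinite, x k ∉ ball z (r / 2) := by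
    filter_upwards [hxp.eventually (gt_mem_nhds (half_pos hr))] with k hk hxk
    refine hpU k (hrU (mem_ball.2 ?_))
    rw [mem_ball] at hxk
    linarith [dist_triangle (p k) (x k) z, dist_comm (p k) (x k)]
  refine not_accPt_of_inter_finite (ball_mem_nhds z (half_pos hr)) ?_
  refine ((eventually_cofinite.1 hfar).image x).subset ?_
  rintro _ ⟨⟨k, rfl⟩, hk⟩
  exact ⟨k, by simpa using hk, rfl⟩

theorem IsOpen.exists_subset_forall_not_accPt_and_subset_closure {X : Type*} [MetricSpace X]
    {U S : Set X} (hU : IsOpen U) (hSU : S ⊆ frontier U) (hS : TopologicalSpace.IsSeparable S) :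
    ∃ E ⊆ U, (∀ z ∈ U, ¬AccPt z (𝓟 E)) ∧ S ⊆ closure E := by
  rcases S.eq_empty_or_nonempty with rfl | hne
  · exact ⟨∅, empty_subset _, fun z _ h ↦ Set.Infinite.of_accPt h finite_empty, empty_subset _⟩
  obtain ⟨p, hpS, hpS_cluster⟩ := hS.exists_seq_mapClusterPt hne
  have hpU : ∀ k, p k ∈ closure U \ U := fun k ↦ hU.frontier_eq ▸ hSU (hpS k)
  have happrox : ∀ k : ℕ, ∃ y ∈ U, dist y (p k) < 1 / (k + 1) := fun k ↦ by
    obtain ⟨y, hyU, hy⟩ := mem_closure_iff.1 (hpU k).1 _ Nat.one_div_pos_of_nat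
    exact ⟨y, hyU, by rwa [dist_comm]⟩
  choose x hxU hxp using happrox
  have hlim : Tendsto (fun k ↦ dist (x k) (p k)) atTop (𝓝 0) :=
    squeeze_zero (fun _ ↦ dist_nonneg) (fun k ↦ (hxp k).le) tendsto_one_div_add_atTop_nhds_zero_nat
  refine ⟨range x, range_subset_iff.2 hxU, fun z hz ↦ ?_, fun q hq ↦ ?_⟩
  · exact not_accPt_range_of_tendsto_dist (hU.mem_nhds hz) (fun k ↦ (hpU k).2)
      (Nat.cofinite_eq_atTop ▸ hlim)
  · exact isClosed_closure.mem_of_mapClusterPt ((hpS_cluster q hq).of_tendsto_dist hlim)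
      (Eventually.of_forall fun k ↦ subset_closure (mem_range_self k))

theorem discrete_set_accumulating_at_boundary_general (Ω : Set ℂ)
    (hΩopen : IsOpen Ω) :
    ∃ E : Set ℂ, E ⊆ Ω ∧ (∀ p ∈ Ω, ¬ AccPt p (Filter.principal E)) ∧
      frontier Ω ⊆ closure E :=
  hΩopen.exists_subset_forall_not_accPt_and_subset_closure subset_rfl (.of_separableSpace _)

/-- **A discrete set accumulating exactly at the boundary.** Let `Ω ⊊ ℂ` be a domain.
Then there exists a set `E ⊆ Ω` with no accumulation point in `Ω` whose closure in `ℂ`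
contains the boundary `∂Ω`. -/
theorem discrete_set_accumulating_at_boundary (Ω : Set ℂ)
    (hΩopen : IsOpen Ω) (hΩconn : IsConnected Ω) (hΩne : Ω ≠ Set.univ) :
    ∃ E : Set ℂ, E ⊆ Ω ∧ (∀ p ∈ Ω, ¬ AccPt p (Filter.principal E)) ∧
      frontier Ω ⊆ closure E :=
  discrete_set_accumulating_at_boundary_general Ω hΩopen
end

section
/- Let Ω ⊊ ℂ be a domain. Then there exists a holomorphic function f on Ω, not identically zero, such that f admits no holomorphic extension to any strictly larger open set: for every connected open set U ⊆ ℂ with Ω ⊆ U and U ≠ Ω, there is no holomorphic function g on U with g = f on Ω. -/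
/-!
Pick boundary points `a n ∈ ∂Ω`, in which every term of a dense sequence of `∂Ω` recurs infinitely
often, and points `p n ∈ Ω` with `‖a n - p n‖ < 2⁻ⁿ`. The product `∏ (z - p n) / (z - a n)`
converges locally uniformly on `Ω`, so it is holomorphic there; its zeros are exactly the `p n`,
and they accumulate at every boundary point. A connected open `U ⊋ Ω` contains a boundary point,
so a holomorphic extension to `U` would have a non-isolated zero in `U` and vanish identically,
whereas the product does not vanish off the `p n`.
-/

open Filter Topology Metric Set

lemma exists_seq_dist_lt_of_subset_closure {X : Type*} [PseudoMetricSpace X] {s t : Set X}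
    [TopologicalSpace.SeparableSpace s] (hs : s.Nonempty) (hst : s ⊆ closure t) {ε : ℕ → ℝ}
    (hε : ∀ n, 0 < ε n) (hε0 : Tendsto ε atTop (𝓝 0)) :
    ∃ a p : ℕ → X, (∀ n, a n ∈ s) ∧ (∀ n, p n ∈ t) ∧ (∀ n, dist (a n) (p n) < ε n) ∧
      s ⊆ closure (range p) := by
  have : Nonempty s := hs.to_subtype
  obtain ⟨v, hv⟩ := TopologicalSpace.exists_dense_seq s
  have happrox (n : ℕ) : ∃ y ∈ t, dist (v n.unpair.1 : X) y < ε n :=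
    Metric.mem_closure_iff.1 (hst (v _).2) _ (hε n)
  choose p hpt hp using happrox
  refine ⟨fun n ↦ v n.unpair.1, p, fun n ↦ (v _).2, hpt, hp, ?_⟩
  have hv_mem (m : ℕ) : (v m : X) ∈ closure (range p) := by
    have hlim : Tendsto (fun k ↦ p (Nat.pair m k)) atTop (𝓝 (v m)) := by
      rw [tendsto_iff_dist_tendsto_zero]
      refine squeeze_zero (fun _ ↦ dist_nonneg) (fun k ↦ ?_)
        (hε0.comp (tendsto_atTop_mono (Nat.right_le_pair m) tendsto_id))
      simpa [dist_comm, Nat.unpair_pair] using (hp (Nat.pair m k)).le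
    exact mem_closure_of_tendsto hlim (Eventually.of_forall fun k ↦ mem_range_self _)
  intro x hx
  have hx' : x ∈ closure (Subtype.val '' range v) :=
    image_closure_subset_closure_image continuous_subtype_val ⟨⟨x, hx⟩, hv ⟨x, hx⟩, rfl⟩
  exact closure_minimal (by rintro _ ⟨_, ⟨m, rfl⟩, rfl⟩; exact hv_mem m) isClosed_closure hx'

lemma IsPreconnected.inter_frontier_nonempty_of_isOpen {X : Type*} [TopologicalSpace X]
    {U V : Set X} (hU : IsPreconnected U) (hV : IsOpen V) (hUV : (U ∩ V).Nonempty)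
    (hUV' : ¬U ⊆ V) : (U ∩ frontier V).Nonempty := by
  by_contra h
  refine hUV' (hU.subset_of_closure_inter_subset hV hUV fun x ⟨hxV, hxU⟩ ↦ ?_)
  by_contra hx
  exact h ⟨x, hxU, hV.frontier_eq ▸ ⟨hxV, hx⟩⟩

lemma IsClosed.exists_pos_forall_le_dist {X : Type*} [PseudoMetricSpace X] {S : Set X}
    (hS : IsClosed S) {z : X} (hz : z ∉ S) :
    ∃ r > 0, ∀ w ∈ closedBall z r, ∀ y ∈ S, r ≤ dist w y := by
  obtain ⟨ε, hε, hball⟩ := Metric.isOpen_iff.1 hS.isOpen_compl z hz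
  refine ⟨ε / 2, by positivity, fun w hw y hy ↦ ?_⟩
  have hzy : ε ≤ dist z y := not_lt.1 fun h ↦ hball (mem_ball'.2 h) hy
  linarith [dist_triangle z w y, mem_closedBall'.1 hw]

/-- The product `∏ (z - p n) / (z - a n)`, with factors written as `1 + (a n - p n) / (z - a n)`
so that its convergence is governed by `∑ ‖a n - p n‖`. -/
noncomputable def zeroPoleProduct (a p : ℕ → ℂ) (z : ℂ) : ℂ :=
  ∏' n, (1 + (a n - p n) / (z - a n))

namespace zeroPoleProduct

variable {S : Set ℂ} {a p : ℕ → ℂ}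

lemma norm_div_sub_le {r : ℝ} (hr : 0 < r) {w : ℂ} (hw : ∀ y ∈ S, r ≤ dist w y)
    (ha : ∀ n, a n ∈ S) (n : ℕ) : ‖(a n - p n) / (w - a n)‖ ≤ ‖a n - p n‖ / r := by
  rw [norm_div, ← dist_eq_norm w]
  gcongr
  exact hw _ (ha n)

theorem hasProdLocallyUniformlyOn (hS : IsClosed S) (ha : ∀ n, a n ∈ S)
    (hap : Summable fun n ↦ ‖a n - p n‖) :
    HasProdLocallyUniformlyOn (fun n z ↦ 1 + (a n - p n) / (z - a n)) (zeroPoleProduct a p) Sᶜ := by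
  refine hasProdLocallyUniformlyOn_of_of_forall_exists_nhds fun z hz ↦ ?_
  obtain ⟨r, hr, hrS⟩ := hS.exists_pos_forall_le_dist hz
  refine ⟨closedBall z r, mem_nhdsWithin_of_mem_nhds (closedBall_mem_nhds z hr), ?_⟩
  refine (hap.div_const r).hasProdUniformlyOn_one_add (isCompact_closedBall z r)
    (Eventually.of_forall fun n w hw ↦ norm_div_sub_le hr (hrS w hw) ha n) fun n ↦ ?_
  refine continuousOn_const.div (continuousOn_id.sub continuousOn_const) fun w hw ↦ ?_
  exact sub_ne_zero.2 fun h ↦ (dist_pos.1 (hr.trans_le (hrS w hw _ (ha n)))) h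

theorem differentiableOn (hS : IsClosed S) (ha : ∀ n, a n ∈ S)
    (hap : Summable fun n ↦ ‖a n - p n‖) : DifferentiableOn ℂ (zeroPoleProduct a p) Sᶜ := by
  have hlim := (hasProdLocallyUniformlyOn hS ha hap).tendstoLocallyUniformlyOn_finsetRange
  refine hlim.differentiableOn (Eventually.of_forall fun N ↦
    DifferentiableOn.fun_finsetProd fun n _ ↦ ?_) hS.isOpen_compl
  refine (differentiableOn_const _).add ((differentiableOn_const _).div
    (differentiableOn_id.sub_const _) fun w hw ↦ ?_)
  exact sub_ne_zero.2 fun h ↦ hw (h ▸ ha n)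

theorem apply_eq_zero {n : ℕ} (h : p n ≠ a n) : zeroPoleProduct a p (p n) = 0 := by
  refine tprod_of_exists_eq_zero ⟨n, ?_⟩
  rw [← neg_sub (p n), neg_div, div_self (sub_ne_zero.2 h), add_neg_cancel]

theorem apply_ne_zero (hS : IsClosed S) (ha : ∀ n, a n ∈ S) (hap : Summable fun n ↦ ‖a n - p n‖)
    {z : ℂ} (hz : z ∉ S) (hzp : ∀ n, z ≠ p n) : zeroPoleProduct a p z ≠ 0 := by
  obtain ⟨r, hr, hrS⟩ := hS.exists_pos_forall_le_dist hz
  refine tprod_one_add_ne_zero_of_summable (fun n ↦ ?_) ((hap.div_const r).of_nonneg_of_le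
    (fun _ ↦ norm_nonneg _) (norm_div_sub_le hr (hrS z (mem_closedBall_self hr.le)) ha))
  have hza : z - a n ≠ 0 := sub_ne_zero.2 fun h ↦ hz (h ▸ ha n)
  rw [one_add_div hza, sub_add_sub_cancel]
  exact div_ne_zero (sub_ne_zero.2 (hzp n)) hza

end zeroPoleProduct

theorem not_exists_extension_of_frontier_subset_closure_zeros {Ω U : Set ℂ} {f : ℂ → ℂ}
    (hΩ : IsOpen Ω) (hU : IsOpen U) (hUc : IsPreconnected U) (hΩU : Ω ⊆ U) (hUΩ : ¬U ⊆ Ω)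
    (hfr : frontier Ω ⊆ closure {z ∈ Ω | f z = 0}) {z₀ : ℂ} (hz₀ : z₀ ∈ Ω) (hf : f z₀ ≠ 0) :
    ¬∃ g : ℂ → ℂ, DifferentiableOn ℂ g U ∧ EqOn g f Ω := by
  rintro ⟨g, hg, hgf⟩
  obtain ⟨q, hqU, hq⟩ := hUc.inter_frontier_nonempty_of_isOpen hΩ ⟨z₀, hΩU hz₀, hz₀⟩ hUΩ
  have hqΩ : q ∉ Ω := (hΩ.frontier_eq ▸ hq).2
  have hgq : ∃ᶠ z in 𝓝[≠] q, g z = 0 := by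
    refine ((mem_closure_ne_iff_frequently_within (s := {z ∈ Ω | f z = 0})).1 ?_).mono
      fun z hz ↦ (hgf hz.1).trans hz.2
    rw [sdiff_singleton_eq_self fun h ↦ hqΩ h.1]
    exact hfr hq
  have hg0 := (hg.analyticOnNhd hU).eqOn_zero_of_preconnected_of_frequently_eq_zero hUc hqU hgq
  exact hf ((hgf hz₀).symm.trans (hg0 (hΩU hz₀)))

/-- **Every planar domain is a domain of holomorphy.** Let `Ω ⊊ ℂ` be a domain. Then
there is a holomorphic function `f` on `Ω`, not identically zero, admitting no
holomorphic extension to any strictly larger connected open set `U ⊇ Ω`. -/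
theorem planar_domain_of_holomorphy (Ω : Set ℂ)
    (hΩopen : IsOpen Ω) (hΩconn : IsConnected Ω) (hΩne : Ω ≠ Set.univ) :
    ∃ f : ℂ → ℂ, DifferentiableOn ℂ f Ω ∧ ¬ Set.EqOn f 0 Ω ∧
      ∀ U : Set ℂ, IsOpen U → IsConnected U → Ω ⊆ U → U ≠ Ω →
        ¬ ∃ g : ℂ → ℂ, DifferentiableOn ℂ g U ∧ Set.EqOn g f Ω := by
  have hΩc : IsClosed Ωᶜ := hΩopen.isClosed_compl
  obtain ⟨a, p, ha, hp, hap, hfr⟩ := exists_seq_dist_lt_of_subset_closure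
    (nonempty_frontier_iff.2 ⟨hΩconn.nonempty, hΩne⟩) frontier_subset_closure
    (fun n ↦ pow_pos one_half_pos n)
    (tendsto_pow_atTop_nhds_zero_of_lt_one one_half_pos.le one_half_lt_one)
  have haΩ (n : ℕ) : a n ∈ Ωᶜ := (hΩopen.frontier_eq ▸ ha n).2
  have hsum : Summable fun n ↦ ‖a n - p n‖ := summable_geometric_two.of_nonneg_of_le
    (fun _ ↦ norm_nonneg _) fun n ↦ (dist_eq_norm (a n) (p n) ▸ hap n).le
  set f := zeroPoleProduct a p
  have hzeros : range p ⊆ {z ∈ Ω | f z = 0} := by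
    rintro _ ⟨n, rfl⟩
    exact ⟨hp n, zeroPoleProduct.apply_eq_zero fun h ↦ haΩ n (h ▸ hp n)⟩
  obtain ⟨z₀, hz₀, hz₀p⟩ := ((countable_range p).dense_compl ℂ).inter_open_nonempty Ω hΩopen
    hΩconn.nonempty
  have hfz₀ : f z₀ ≠ 0 := zeroPoleProduct.apply_ne_zero hΩc haΩ hsum (not_not_intro hz₀)
    fun n h ↦ hz₀p ⟨n, h.symm⟩
  refine ⟨f, compl_compl Ω ▸ zeroPoleProduct.differentiableOn hΩc haΩ hsum,
    fun h ↦ hfz₀ (h hz₀), fun U hUo hUc hΩU hUΩ ↦ ?_⟩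
  exact not_exists_extension_of_frontier_subset_closure_zeros hΩopen hUo hUc.isPreconnected hΩU
    (fun h ↦ hUΩ (h.antisymm hΩU)) (hfr.trans (closure_mono hzeros)) hz₀ hfz₀
end
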